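/- arXiv:1908.01084 — 3 statements merged into one kernel-verified Lean document; each statement's English description precedes it below -/
import Mathlib

section
/- For every integer n ≥ 1 and all real numbers q, r, x, t with (1+x)(x+t)(1+xt) ≠ 0, one has Σ_{σ∈S_n(321)} q^{cros σ} (tq)^{exc σ} r^{fix σ} = ((1+xt)/(1+x))^{n} · Σ_{σ∈S_n(321)} q^{cros σ} · ((1+x)² t/((x+t)(1+xt)))^{cpk σ} · (q(x+t)/(1+xt))^{exc σ} · ((1+x)r/(1+xt))^{fix σ}. -/
open Finset

open scoped Classical

noncomputable section

namespace EulerExc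

variable {n : ℕ}

/-- 1-based value of `σ` at position `k ∈ [1,n]`, with boundary convention
`σ(0) = σ(n+1) = 0` outside. -/
def sv (σ : Equiv.Perm (Fin n)) (k : ℕ) : ℕ :=
  if h : 1 ≤ k ∧ k ≤ n then ((σ ⟨k - 1, by omega⟩ : Fin n) : ℕ) + 1 else 0

/-- 1-based value with boundary convention `σ(0) = 0`, `σ(n+1) = ∞`. -/
def svInf (σ : Equiv.Perm (Fin n)) (k : ℕ) : ℕ :=
  if k = 0 then 0 else if k ≤ n then sv σ k else n + 1

/-- number of excedances -/
def exc (σ : Equiv.Perm (Fin n)) : ℕ := (univ.filter fun i : Fin n => i < σ i).card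

/-- number of fixed points -/
def fixc (σ : Equiv.Perm (Fin n)) : ℕ := (univ.filter fun i : Fin n => σ i = i).card

/-- number of drops -/
def dropc (σ : Equiv.Perm (Fin n)) : ℕ := (univ.filter fun i : Fin n => σ i < i).card

/-- number of inversions -/
def inv (σ : Equiv.Perm (Fin n)) : ℕ :=
  (univ.filter fun p : Fin n × Fin n => p.1 < p.2 ∧ σ p.2 < σ p.1).card

/-- number of descents -/
def des (σ : Equiv.Perm (Fin n)) : ℕ :=
  ((Icc 1 (n - 1)).filter fun i => sv σ (i + 1) < sv σ i).card

/-- number of ascents -/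
def asc (σ : Equiv.Perm (Fin n)) : ℕ :=
  ((Icc 1 (n - 1)).filter fun i => sv σ i < sv σ (i + 1)).card

/-- crossing number: pairs `(i,j)` with `j < i < σ(j) < σ(i)` or `σ(i) < σ(j) ≤ i < j` -/
def cros (σ : Equiv.Perm (Fin n)) : ℕ :=
  (univ.filter fun p : Fin n × Fin n =>
    (p.2 < p.1 ∧ p.1 < σ p.2 ∧ σ p.2 < σ p.1) ∨
    (σ p.1 < σ p.2 ∧ σ p.2 ≤ p.1 ∧ p.1 < p.2)).card

/-- nesting number: pairs `(i,j)` with `j < i < σ(i) < σ(j)` or `σ(j) < σ(i) ≤ i < j` -/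
def nest (σ : Equiv.Perm (Fin n)) : ℕ :=
  (univ.filter fun p : Fin n × Fin n =>
    (p.2 < p.1 ∧ p.1 < σ p.1 ∧ σ p.1 < σ p.2) ∨
    (σ p.2 < σ p.1 ∧ σ p.1 ≤ p.1 ∧ p.1 < p.2)).card

def icr (σ : Equiv.Perm (Fin n)) : ℕ := cros σ⁻¹

/-- number of cyclic peaks -/
def cpk (σ : Equiv.Perm (Fin n)) : ℕ :=
  (univ.filter fun x : Fin n => σ⁻¹ x < x ∧ σ x < x).card

/-- number of cyclic valleys -/
def cval (σ : Equiv.Perm (Fin n)) : ℕ :=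
  (univ.filter fun x : Fin n => x < σ⁻¹ x ∧ x < σ x).card

/-- number of double excedances -/
def cda (σ : Equiv.Perm (Fin n)) : ℕ :=
  (univ.filter fun x : Fin n => σ⁻¹ x < x ∧ x < σ x).card

/-- number of double drops -/
def cdd (σ : Equiv.Perm (Fin n)) : ℕ :=
  (univ.filter fun x : Fin n => x < σ⁻¹ x ∧ σ x < x).card

/-- number of cycles (including fixed points) -/
def cyc (σ : Equiv.Perm (Fin n)) : ℕ := σ.cycleType.card + fixc σ

/-- the star companion `σ*` of `σ`: a permutation of `{0,1,…,n}` with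
`σ*(0) = n` and `σ*(i) = σ(i) - 1` for `i ∈ [n]`. -/
def star (σ : Equiv.Perm (Fin n)) : Equiv.Perm (Fin (n + 1)) :=
  (Equiv.Perm.decomposeFin.symm (0, σ)).trans (Equiv.subRight (1 : Fin (n + 1)))

def cpkStar (σ : Equiv.Perm (Fin n)) : ℕ :=
  (univ.filter fun i : Fin (n + 1) =>
    1 ≤ (i : ℕ) ∧ (i : ℕ) < n ∧ (star σ)⁻¹ i < i ∧ star σ i < i).card

def cdaStar (σ : Equiv.Perm (Fin n)) : ℕ :=
  (univ.filter fun i : Fin (n + 1) =>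
    1 ≤ (i : ℕ) ∧ (i : ℕ) < n ∧ (star σ)⁻¹ i < i ∧ i < star σ i).card

def cddStar (σ : Equiv.Perm (Fin n)) : ℕ :=
  (univ.filter fun i : Fin (n + 1) =>
    1 ≤ (i : ℕ) ∧ (i : ℕ) < n ∧ i < (star σ)⁻¹ i ∧ star σ i < i).card

def fixStar (σ : Equiv.Perm (Fin n)) : ℕ :=
  (univ.filter fun i : Fin (n + 1) =>
    1 ≤ (i : ℕ) ∧ (i : ℕ) < n ∧ star σ i = i).card

def cycStar (σ : Equiv.Perm (Fin n)) : ℕ := cyc (star σ)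

/-- number of occurrences of the vincular pattern 31-2 -/
def p31_2 (σ : Equiv.Perm (Fin n)) : ℕ :=
  ((Icc 1 n ×ˢ Icc 1 n).filter fun p =>
    p.1 + 1 < p.2 ∧ sv σ (p.1 + 1) < sv σ p.2 ∧ sv σ p.2 < sv σ p.1).card

/-- number of occurrences of the vincular pattern 2-13 -/
def p2_13 (σ : Equiv.Perm (Fin n)) : ℕ :=
  ((Icc 1 n ×ˢ Icc 1 n).filter fun p =>
    p.2 < p.1 ∧ p.1 < n ∧ sv σ p.1 < sv σ p.2 ∧ sv σ p.2 < sv σ (p.1 + 1)).card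

/-- number of occurrences of the vincular pattern 2-31 -/
def p2_31 (σ : Equiv.Perm (Fin n)) : ℕ :=
  ((Icc 1 n ×ˢ Icc 1 n).filter fun p =>
    p.2 < p.1 ∧ p.1 < n ∧ sv σ (p.1 + 1) < sv σ p.2 ∧ sv σ p.2 < sv σ p.1).card

/-- number of peaks (convention 0--0) -/
def pk (σ : Equiv.Perm (Fin n)) : ℕ :=
  ((Icc 1 n).filter fun i => sv σ (i - 1) < sv σ i ∧ sv σ (i + 1) < sv σ i).card

/-- number of valleys (convention 0--0) -/
def vall (σ : Equiv.Perm (Fin n)) : ℕ :=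
  ((Icc 1 n).filter fun i => sv σ i < sv σ (i - 1) ∧ sv σ i < sv σ (i + 1)).card

/-- number of double ascents (convention 0--0) -/
def da (σ : Equiv.Perm (Fin n)) : ℕ :=
  ((Icc 1 n).filter fun i => sv σ (i - 1) < sv σ i ∧ sv σ i < sv σ (i + 1)).card

/-- number of double descents (convention 0--0) -/
def dd (σ : Equiv.Perm (Fin n)) : ℕ :=
  ((Icc 1 n).filter fun i => sv σ i < sv σ (i - 1) ∧ sv σ (i + 1) < sv σ i).card

/-- number of peaks (convention 0--∞) -/
def lpk (σ : Equiv.Perm (Fin n)) : ℕ :=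
  ((Icc 1 n).filter fun i => svInf σ (i - 1) < svInf σ i ∧ svInf σ (i + 1) < svInf σ i).card

/-- number of valleys (convention 0--∞) -/
def lval (σ : Equiv.Perm (Fin n)) : ℕ :=
  ((Icc 1 n).filter fun i => svInf σ i < svInf σ (i - 1) ∧ svInf σ i < svInf σ (i + 1)).card

/-- number of double ascents (convention 0--∞) -/
def lda (σ : Equiv.Perm (Fin n)) : ℕ :=
  ((Icc 1 n).filter fun i => svInf σ (i - 1) < svInf σ i ∧ svInf σ i < svInf σ (i + 1)).card

/-- number of double descents (convention 0--∞) -/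
def ldd (σ : Equiv.Perm (Fin n)) : ℕ :=
  ((Icc 1 n).filter fun i => svInf σ i < svInf σ (i - 1) ∧ svInf σ (i + 1) < svInf σ i).card

/-- number of foremaxima: double ascents (convention 0--∞) that are
left-to-right maxima -/
def fmax (σ : Equiv.Perm (Fin n)) : ℕ :=
  ((Icc 1 n).filter fun i =>
    svInf σ (i - 1) < svInf σ i ∧ svInf σ i < svInf σ (i + 1) ∧
    ∀ j ∈ Icc 1 i, sv σ j ≤ sv σ i).card

/-- `scda σ = #{i ∈ [n-1] : i < σ(i) and i+1 > σ⁻¹(i+1)}` -/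
def scda (σ : Equiv.Perm (Fin n)) : ℕ :=
  ((Icc 1 (n - 1)).filter fun i => i < sv σ i ∧ sv σ⁻¹ (i + 1) < i + 1).card

/-- `σ` avoids the pattern 321 -/
def Avoids321 (σ : Equiv.Perm (Fin n)) : Prop :=
  ¬ ∃ i j k : Fin n, i < j ∧ j < k ∧ σ k < σ j ∧ σ j < σ i

/-- `σ` avoids the pattern 231 -/
def Avoids231 (σ : Equiv.Perm (Fin n)) : Prop :=
  ¬ ∃ i j k : Fin n, i < j ∧ j < k ∧ σ k < σ i ∧ σ i < σ j

/-- `σ` avoids the pattern 312 -/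
def Avoids312 (σ : Equiv.Perm (Fin n)) : Prop :=
  ¬ ∃ i j k : Fin n, i < j ∧ j < k ∧ σ j < σ k ∧ σ k < σ i

/-- `σ` avoids the pattern 213 -/
def Avoids213 (σ : Equiv.Perm (Fin n)) : Prop :=
  ¬ ∃ i j k : Fin n, i < j ∧ j < k ∧ σ j < σ i ∧ σ i < σ k

/-- `σ` avoids the pattern 132 -/
def Avoids132 (σ : Equiv.Perm (Fin n)) : Prop :=
  ¬ ∃ i j k : Fin n, i < j ∧ j < k ∧ σ i < σ k ∧ σ k < σ j

/-- `σ` is a derangement -/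
def IsDerangement (σ : Equiv.Perm (Fin n)) : Prop := ∀ i, σ i ≠ i

/-! Signed permutations `B_n`, encoded as a pair `(σ, ε)` of an ordinary
permutation (the absolute value) together with signs attached to positions. -/

/-- number of negative values -/
def negB (ε : Fin n → Bool) : ℕ := (univ.filter fun i => ε i = true).card

/-- number of type B excedances, w.r.t. the friends order -/
def excB (σ : Equiv.Perm (Fin n)) (ε : Fin n → Bool) : ℕ :=
  (univ.filter fun i : Fin n => i < σ i ∨ (σ i = i ∧ ε i = true)).card

/-- the (1-based, signed, integer) value of the signed permutation `(σ, ε)` at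
position `k ∈ [1,n]`, with `0` outside. -/
def signedVal (σ : Equiv.Perm (Fin n)) (ε : Fin n → Bool) (k : ℕ) : ℤ :=
  if h : 1 ≤ k ∧ k ≤ n then
    (if ε ⟨k - 1, by omega⟩ then -(((σ ⟨k - 1, by omega⟩ : Fin n) : ℕ) + 1 : ℤ)
     else (((σ ⟨k - 1, by omega⟩ : Fin n) : ℕ) + 1 : ℤ))
  else 0

/-- number of type B descents -/
def desB (σ : Equiv.Perm (Fin n)) (ε : Fin n → Bool) : ℕ :=
  ((range n).filter fun i => signedVal σ ε (i + 1) < signedVal σ ε i).card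


/-!
A 321-avoiding permutation maps its excedance positions `P` increasingly onto its excedance
values `V`, and the complement of `P` increasingly onto the complement of `V`; so it is determined
by the pair `(P, V)`, and the pairs that occur are exactly those in which `V` dominates `P`
elementwise. On such pairs `cros + exc`, `fix` and `cpk` are read off from rank counts, and they
do not change when a common element of `P ∩ V` (a cyclic double ascent) is deleted from both sets,
which turns it into a cyclic double drop. Hence the generating function of `S_n(321)` by
`(cros + exc, fix, cpk, cda, cdd)` depends on the weights `u` of `cda` and `v` of `cdd` only
through `u + v`. Since `exc = cpk + cda` and `n = 2 cpk + cda + fix + cdd`, both sides of the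
identity are instances of it, with `(u, v) = (t, 1)` and
`(u, v) = ((x + t) / (1 + x), (1 + x t) / (1 + x))`.
-/

section Rank

variable {α : Type*} [LinearOrder α] {s t : Finset α} {a b : α}

def countLT (s : Finset α) (a : α) : ℕ := #{x ∈ s | x < a}

def countLE (s : Finset α) (a : α) : ℕ := #{x ∈ s | x ≤ a}

lemma countLE_of_mem (ha : a ∈ s) : countLE s a = countLT s a + 1 := by
  have : {x ∈ s | x ≤ a} = insert a {x ∈ s | x < a} := by
    ext x
    simp only [mem_filter, mem_insert]
    constructor
    · rintro ⟨hx, hle⟩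
      exact hle.lt_or_eq.elim (fun h => Or.inr ⟨hx, h⟩) Or.inl
    · rintro (rfl | ⟨hx, h⟩)
      exacts [⟨ha, le_rfl⟩, ⟨hx, h.le⟩]
  rw [countLE, this, card_insert_of_notMem (by simp), countLT]

lemma countLE_of_notMem (ha : a ∉ s) : countLE s a = countLT s a :=
  congrArg card <| filter_congr fun _ hx => (ne_of_mem_of_not_mem hx ha).le_iff_lt

lemma countLT_le_countLE (s : Finset α) (a : α) : countLT s a ≤ countLE s a :=
  card_le_card <| monotone_filter_right _ fun _ _ hx => hx.le

lemma countLT_le_countLT (h : a ≤ b) : countLT s a ≤ countLT s b :=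
  card_le_card <| monotone_filter_right _ fun _ _ hx => hx.trans_le h

lemma countLE_le_countLE (h : a ≤ b) : countLE s a ≤ countLE s b :=
  card_le_card <| monotone_filter_right _ fun _ _ hx => hx.trans h

lemma countLE_le_countLT (h : a < b) : countLE s a ≤ countLT s b :=
  card_le_card <| monotone_filter_right _ fun _ _ hx => hx.trans_lt h

lemma countLT_lt_countLT (ha : a ∈ s) (h : a < b) : countLT s a < countLT s b := by
  have := countLE_le_countLT (s := s) h
  rw [countLE_of_mem ha] at this
  omega

lemma countLT_injOn (s : Finset α) : Set.InjOn (countLT s) s := by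
  intro a ha b hb h
  by_contra hne
  rcases lt_or_gt_of_ne hne with hlt | hlt
  · exact (countLT_lt_countLT ha hlt).ne h
  · exact (countLT_lt_countLT hb hlt).ne' h

lemma countLT_union (h : Disjoint s t) (a : α) :
    countLT (s ∪ t) a = countLT s a + countLT t a := by
  rw [countLT, filter_union, card_union_of_disjoint (disjoint_filter_filter h)]; rfl

lemma countLE_union (h : Disjoint s t) (a : α) :
    countLE (s ∪ t) a = countLE s a + countLE t a := by
  rw [countLE, filter_union, card_union_of_disjoint (disjoint_filter_filter h)]; rfl

lemma countLT_sdiff_add (h : t ⊆ s) (a : α) :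
    countLT (s \ t) a + countLT t a = countLT s a := by
  rw [← countLT_union sdiff_disjoint, sdiff_union_of_subset h]

lemma countLE_sdiff_add (h : t ⊆ s) (a : α) :
    countLE (s \ t) a + countLE t a = countLE s a := by
  rw [← countLE_union sdiff_disjoint, sdiff_union_of_subset h]

lemma countLT_add_countLT_compl [Fintype α] (s : Finset α) (a : α) :
    countLT s a + countLT sᶜ a = countLT univ a := by
  rw [← countLT_union disjoint_compl_right, union_compl]

lemma countLE_add_countLE_compl [Fintype α] (s : Finset α) (a : α) :
    countLE s a + countLE sᶜ a = countLE univ a := by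
  rw [← countLE_union disjoint_compl_right, union_compl]

lemma countLE_image {β : Type*} {f : β → α} (hf : Function.Injective f) (s : Finset β)
    (a : α) :
    countLE (s.image f) a = #{x ∈ s | f x ≤ a} := by
  rw [countLE, filter_image, card_image_of_injective _ hf]

lemma countLT_image_of_strictMonoOn {β : Type*} [LinearOrder β] {f : β → α} {s : Finset β}
    {b : β} (hf : StrictMonoOn f s) (hb : b ∈ s) : countLT (s.image f) (f b) = countLT s b := by
  rw [countLT, filter_image,
    card_image_of_injOn (hf.injOn.mono (coe_subset.2 (filter_subset _ _)))]
  congr 1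
  exact filter_congr fun x hx => hf.lt_iff_lt hx hb

lemma eqOn_of_strictMonoOn_of_image_eq {β : Type*} [LinearOrder β] {f g : β → α}
    {s : Finset β} (hf : StrictMonoOn f s) (hg : StrictMonoOn g s) (h : s.image f = s.image g) :
    Set.EqOn f g s := by
  intro b hb
  refine countLT_injOn (s.image f) (mem_image_of_mem f hb) (h ▸ mem_image_of_mem g hb) ?_
  rw [countLT_image_of_strictMonoOn hf hb, h, countLT_image_of_strictMonoOn hg hb]

end Rank

section Dominated

variable {α : Type*} [LinearOrder α] {P V S : Finset α}

/-- Equivalently: `#P = #V` and the `m`-th smallest element of `P` lies below the `m`-th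
smallest element of `V`, for every `m`. -/
def Dominated (P V : Finset α) : Prop := #P = #V ∧ ∀ a, countLE V a ≤ countLT P a

lemma Dominated.countLT_lt_of_mem (hd : Dominated P V) {x : α} (hx : x ∈ V) :
    countLT V x < countLT P x := by
  have := hd.2 x
  rw [countLE_of_mem hx] at this
  omega

lemma Dominated.sdiff (hd : Dominated P V) (hS : S ⊆ P ∩ V) : Dominated (P \ S) (V \ S) := by
  have hSP := hS.trans inter_subset_left
  have hSV := hS.trans inter_subset_right
  refine ⟨by rw [card_sdiff_of_subset hSP, card_sdiff_of_subset hSV, hd.1], fun a => ?_⟩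
  have h1 := countLE_sdiff_add hSV a
  have h2 := countLT_sdiff_add hSP a
  have h3 := hd.2 a
  by_cases ha : a ∈ S
  · rw [countLE_of_mem ha] at h1; omega
  · rw [countLE_of_notMem ha] at h1; omega

lemma Dominated.countLE_compl [Fintype α] (hd : Dominated P V) (a : α) :
    countLE Pᶜ a ≤ countLE Vᶜ a := by
  have := countLE_add_countLE_compl P a
  have := countLE_add_countLE_compl V a
  have := hd.2 a
  have := countLT_le_countLE P a
  omega

end Dominated

section Merge

variable {α : Type*} [LinearOrder α] [Fintype α] {P V : Finset α}

lemma exists_perm_strictMonoOn_of_card_eq (h : #P = #V) :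
    ∃ σ : Equiv.Perm α, P.image σ = V ∧ StrictMonoOn σ P ∧ StrictMonoOn σ ↑Pᶜ := by
  let e : P ≃o V := (Fintype.orderIsoFinOfCardEq P (Fintype.card_coe P)).symm.trans
    (Fintype.orderIsoFinOfCardEq V ((Fintype.card_coe V).trans h.symm))
  let f : {x // x ∉ P} ≃o {x // x ∉ V} := (Fintype.orderIsoFinOfCardEq _ rfl).symm.trans
    (Fintype.orderIsoFinOfCardEq _ (by simp [Fintype.card_subtype_compl, h]))
  let σ := Equiv.subtypeCongr e.toEquiv f.toEquiv
  have hσP : ∀ i (hi : i ∈ P), σ i = e ⟨i, hi⟩ := fun i hi => by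
    simp [σ, Equiv.subtypeCongr, Equiv.sumCompl_symm_apply_of_pos hi]
  have hσPc : ∀ i (hi : i ∉ P), σ i = f ⟨i, hi⟩ := fun i hi => by
    simp [σ, Equiv.subtypeCongr, Equiv.sumCompl_symm_apply_of_neg hi]
  refine ⟨σ, ?_, fun i hi j hj hij => ?_, fun i hi j hj hij => ?_⟩
  · refine eq_of_subset_of_card_le (image_subset_iff.2 fun i hi => ?_) ?_
    · rw [hσP i hi]; exact (e ⟨i, hi⟩).2
    · rw [card_image_of_injective _ σ.injective, h]
  · rw [hσP i hi, hσP j hj]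
    exact e.strictMono (show (⟨i, hi⟩ : P) < ⟨j, hj⟩ from hij)
  · simp only [coe_compl, Set.mem_compl_iff, mem_coe] at hi hj
    rw [hσPc i hi, hσPc j hj]
    exact f.strictMono (show (⟨i, hi⟩ : {x // x ∉ P}) < ⟨j, hj⟩ from hij)

end Merge

section ExcedanceSet

variable {α : Type*} [LinearOrder α] [Fintype α] {P V : Finset α} {i x : α}

lemma image_compl_perm (σ : Equiv.Perm α) (s : Finset α) : sᶜ.image σ = (s.image σ)ᶜ :=
  coe_injective <| by push_cast; exact σ.image_compl s

variable (σ : Equiv.Perm α)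

def excSet : Finset α := {i | i < σ i}

def excValSet : Finset α := {x | σ⁻¹ x < x}

variable {σ}

lemma mem_excSet : i ∈ excSet σ ↔ i < σ i := by simp [excSet]

lemma mem_excValSet : x ∈ excValSet σ ↔ σ⁻¹ x < x := by simp [excValSet]

variable (σ)

lemma image_excSet : (excSet σ).image σ = excValSet σ := by
  ext x
  simp only [mem_image, mem_excSet, mem_excValSet]
  constructor
  · rintro ⟨i, hi, rfl⟩
    simpa using hi
  · exact fun hx => ⟨σ⁻¹ x, by simpa using hx, by simp⟩

lemma dominated_excSet : Dominated (excSet σ) (excValSet σ) := by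
  refine ⟨by rw [← image_excSet, card_image_of_injective _ σ.injective], fun a => ?_⟩
  refine card_le_card_of_injOn (σ⁻¹ ·) (fun v hv => ?_) σ⁻¹.injective.injOn
  simp only [coe_filter, Set.mem_ofPred_eq, mem_excValSet] at hv ⊢
  exact ⟨mem_excSet.2 (by simpa using hv.1), hv.1.trans_le hv.2⟩

lemma card_filter_excSet_add_countLE (a : α) :
    #{j ∈ excSet σ | j < a ∧ a < σ j} + countLE (excValSet σ) a = countLT (excSet σ) a := by
  rw [← image_excSet, countLE_image σ.injective, countLT,
    ← card_filter_add_card_filter_not (s := {j ∈ excSet σ | j < a}) (fun j => a < σ j),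
    filter_filter, filter_filter]
  congr 2
  exact filter_congr fun j hj => ⟨fun h => ⟨(mem_excSet.1 hj).trans_le h, not_lt.2 h⟩,
    fun h => not_lt.1 h.2⟩

lemma card_filter_compl_excSet_add_countLE (a : α) :
    #{j ∈ (excSet σ)ᶜ | a < j ∧ σ j ≤ a} + countLE (excSet σ)ᶜ a
      = countLE (excValSet σ)ᶜ a := by
  rw [← image_excSet, ← image_compl_perm, countLE_image σ.injective,
    ← card_filter_add_card_filter_not (s := {j ∈ (excSet σ)ᶜ | σ j ≤ a}) (fun j => a < j),
    filter_filter, filter_filter, countLE]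
  congr 1
  · exact congrArg card (filter_congr fun j _ => and_comm)
  · refine congrArg card (filter_congr fun j hj => ?_)
    have : σ j ≤ j := not_lt.1 (mem_excSet.not.1 (mem_compl.1 hj))
    exact ⟨fun h => ⟨this.trans h, not_lt.2 h⟩, fun h => not_lt.1 h.2⟩

variable {σ}

lemma excSet_eq_of_strictMonoOn (hd : Dominated P V) (himg : P.image σ = V)
    (hP : StrictMonoOn σ P) (hPc : StrictMonoOn σ ↑Pᶜ) : excSet σ = P := by
  -- `σ` preserves ranks inside `P` and inside `Pᶜ`; domination forces `i < σ i` exactly on `P`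
  ext i
  rw [mem_excSet]
  constructor
  · intro hlt
    by_contra hi
    have hrank := countLT_image_of_strictMonoOn hPc (mem_compl.2 hi)
    rw [image_compl_perm, himg] at hrank
    have h1 := countLE_le_countLT (s := Vᶜ) hlt
    have h2 := hd.countLE_compl i
    rw [countLE_of_mem (mem_compl.2 hi)] at h2
    omega
  · intro hi
    by_contra hle
    have hrank := countLT_image_of_strictMonoOn hP hi
    rw [himg] at hrank
    have h1 := countLE_le_countLE (s := V) (not_lt.1 hle)
    rw [countLE_of_mem (himg ▸ mem_image_of_mem σ hi)] at h1
    have h2 := hd.2 i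
    omega

end ExcedanceSet

section Toggle

variable {α : Type*} [LinearOrder α] [Fintype α] {P V S : Finset α}

-- No truncation on dominated pairs, where `countLE V a ≤ countLT P a ≤ countLE P a`.
def area (P V : Finset α) : ℕ := ∑ a, (countLE P a - countLE V a)

def fixSet (P V : Finset α) : Finset α := {x ∈ (P ∪ V)ᶜ | countLT P x = countLT V x}

def cddSet (P V : Finset α) : Finset α := {x ∈ (P ∪ V)ᶜ | countLT P x ≠ countLT V x}

lemma mem_fixSet {x : α} :
    x ∈ fixSet P V ↔ x ∉ P ∧ x ∉ V ∧ countLT P x = countLT V x := by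
  simp [fixSet, and_assoc]

lemma mem_cddSet {x : α} :
    x ∈ cddSet P V ↔ x ∉ P ∧ x ∉ V ∧ countLT P x ≠ countLT V x := by
  simp [cddSet, and_assoc]

variable (α) in
def dominatedPairs : Finset (Finset α × Finset α) := {pv | Dominated pv.1 pv.2}

lemma mem_dominatedPairs {pv : Finset α × Finset α} :
    pv ∈ dominatedPairs α ↔ Dominated pv.1 pv.2 := by
  simp [dominatedPairs]

lemma Dominated.area_sdiff (hd : Dominated P V) (hS : S ⊆ P ∩ V) :
    area (P \ S) (V \ S) = area P V := by
  refine sum_congr rfl fun a _ => ?_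
  have h1 := countLE_sdiff_add (hS.trans inter_subset_right) a
  have h2 := countLE_sdiff_add (hS.trans inter_subset_left) a
  have h3 := hd.2 a
  have h4 := countLT_le_countLE P a
  omega

lemma Dominated.fixSet_sdiff (hd : Dominated P V) (hS : S ⊆ P ∩ V) :
    fixSet (P \ S) (V \ S) = fixSet P V := by
  have hSP := hS.trans inter_subset_left
  have hSV := hS.trans inter_subset_right
  ext x
  have h1 := countLT_sdiff_add hSP x
  have h2 := countLT_sdiff_add hSV x
  simp only [mem_fixSet, mem_sdiff, not_and, not_not]
  by_cases hxS : x ∈ S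
  · have := hd.countLT_lt_of_mem (hSV hxS)
    simp only [hxS, hSP hxS, hSV hxS, imp_true_iff, true_and, not_true_eq_false, false_and,
      iff_false]
    omega
  · simp only [hxS, imp_false]
    constructor <;> rintro ⟨hP, hV, h⟩ <;> exact ⟨hP, hV, by omega⟩

lemma Dominated.cddSet_sdiff (hd : Dominated P V) (hS : S ⊆ P ∩ V) :
    cddSet (P \ S) (V \ S) = cddSet P V ∪ S := by
  have hSP := hS.trans inter_subset_left
  have hSV := hS.trans inter_subset_right
  ext x
  have h1 := countLT_sdiff_add hSP x
  have h2 := countLT_sdiff_add hSV x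
  simp only [mem_union, mem_cddSet, mem_sdiff, not_and, not_not]
  by_cases hxS : x ∈ S
  · have := hd.countLT_lt_of_mem (hSV hxS)
    simp only [hxS, imp_true_iff, true_and, or_true, iff_true]
    omega
  · simp only [hxS, imp_false, or_false]
    constructor <;> rintro ⟨hP, hV, h⟩ <;> exact ⟨hP, hV, by omega⟩

lemma disjoint_cddSet_left : Disjoint P (cddSet P V) :=
  disjoint_left.2 fun _ hP hC => (mem_cddSet.1 hC).1 hP

lemma disjoint_cddSet_right : Disjoint V (cddSet P V) :=
  disjoint_left.2 fun _ hV hC => (mem_cddSet.1 hC).2.1 hV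

lemma Dominated.union_cddSet (hd : Dominated P V) :
    Dominated (P ∪ cddSet P V) (V ∪ cddSet P V) := by
  refine ⟨by rw [card_union_of_disjoint disjoint_cddSet_left,
    card_union_of_disjoint disjoint_cddSet_right, hd.1], fun a => ?_⟩
  rw [countLE_union disjoint_cddSet_right, countLT_union disjoint_cddSet_left]
  have := hd.2 a
  by_cases ha : a ∈ cddSet P V
  · obtain ⟨-, haV, hne⟩ := mem_cddSet.1 ha
    rw [countLE_of_mem ha, countLE_of_notMem haV] at *
    omega
  · rw [countLE_of_notMem ha]
    omega

lemma cddSet_union_cddSet :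
    cddSet (P ∪ cddSet P V) (V ∪ cddSet P V) = ∅ := by
  refine eq_empty_of_forall_notMem fun x hx => ?_
  rw [mem_cddSet, countLT_union disjoint_cddSet_left, countLT_union disjoint_cddSet_right] at hx
  simp only [mem_union, not_or] at hx
  obtain ⟨⟨hP, hC⟩, ⟨hV, -⟩, hne⟩ := hx
  have : countLT P x = countLT V x := by_contra fun h => hC (mem_cddSet.2 ⟨hP, hV, h⟩)
  omega

/-- Toggling the elements of `S ⊆ P ∩ V` out of both sets turns them into elements of
`cddSet`, and every dominated pair arises exactly once from a `cddSet`-free one. -/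
lemma sum_dominatedPairs_toggle (g : ℕ → ℕ → ℕ → ℝ) (u v : ℝ) :
    ∑ pv ∈ dominatedPairs α, g (area pv.1 pv.2) #(fixSet pv.1 pv.2) #(pv.2 \ pv.1)
        * u ^ #(pv.1 ∩ pv.2) * v ^ #(cddSet pv.1 pv.2)
      = ∑ pv ∈ dominatedPairs α with cddSet pv.1 pv.2 = ∅,
        g (area pv.1 pv.2) #(fixSet pv.1 pv.2) #(pv.2 \ pv.1) * (u + v) ^ #(pv.1 ∩ pv.2) := by
  symm
  calc _ = ∑ pv ∈ dominatedPairs α with cddSet pv.1 pv.2 = ∅,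
        ∑ S ∈ (pv.1 ∩ pv.2).powerset,
        g (area pv.1 pv.2) #(fixSet pv.1 pv.2) #(pv.2 \ pv.1)
          * u ^ (#(pv.1 ∩ pv.2) - #S) * v ^ #S := by
        refine sum_congr rfl fun pv _ => ?_
        rw [add_comm u v, ← sum_pow_mul_eq_add_pow, mul_sum]
        exact sum_congr rfl fun S _ => by ring
    _ = _ := by
        rw [sum_sigma']
        refine sum_nbij' (fun x => (x.1.1 \ x.2, x.1.2 \ x.2))
          (fun pv => ⟨(pv.1 ∪ cddSet pv.1 pv.2, pv.2 ∪ cddSet pv.1 pv.2), cddSet pv.1 pv.2⟩)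
          ?_ ?_ ?_ ?_ ?_
        · rintro ⟨⟨P, V⟩, S⟩ hx
          simp only [mem_sigma, mem_filter, mem_dominatedPairs, mem_powerset] at hx ⊢
          exact hx.1.1.sdiff hx.2
        · rintro ⟨P, V⟩ hx
          simp only [mem_sigma, mem_filter, mem_dominatedPairs, mem_powerset] at hx ⊢
          exact ⟨⟨hx.union_cddSet, cddSet_union_cddSet⟩,
            subset_inter subset_union_right subset_union_right⟩
        · rintro ⟨⟨P, V⟩, S⟩ hx
          simp only [mem_sigma, mem_filter, mem_dominatedPairs, mem_powerset] at hx
          obtain ⟨⟨hd, hfree⟩, hS⟩ := hx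
          simp only [hd.cddSet_sdiff hS, hfree, empty_union,
            sdiff_union_of_subset (hS.trans inter_subset_left),
            sdiff_union_of_subset (hS.trans inter_subset_right)]
        · rintro ⟨P, V⟩ -
          simp only [union_sdiff_cancel_right disjoint_cddSet_left,
            union_sdiff_cancel_right disjoint_cddSet_right]
        · rintro ⟨⟨P, V⟩, S⟩ hx
          simp only [mem_sigma, mem_filter, mem_dominatedPairs, mem_powerset] at hx
          obtain ⟨⟨hd, hfree⟩, hS⟩ := hx
          have hinter : (P \ S) ∩ (V \ S) = (P ∩ V) \ S := inf_sdiff.symm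
          simp only [hd.area_sdiff hS, hd.fixSet_sdiff hS, hd.cddSet_sdiff hS, hfree,
            empty_union, sdiff_sdiff_sdiff_cancel_right (hS.trans inter_subset_left), hinter,
            card_sdiff_of_subset hS]

end Toggle

section Avoids321

lemma exists_gt_apply_lt {α : Type*} [LinearOrder α] [Fintype α] (σ : Equiv.Perm α) {i j : α}
    (hij : i < j) (hj : j ≤ σ j) (h : σ j < σ i) : ∃ k, j < k ∧ σ k < σ j := by
  by_contra! H
  -- otherwise `σ⁻¹` injects the values below `σ j` into the positions below `j` other than `i`
  have hcard := card_le_card_of_injOn (s := ({y | y < σ j} : Finset α))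
    (t := ({x | x < j} : Finset α).erase i) (σ⁻¹ ·) (fun y hy => ?_) σ⁻¹.injective.injOn
  · rw [card_erase_of_mem (by simpa using hij)] at hcard
    have h1 : countLT univ j ≤ countLT univ (σ j) := countLT_le_countLT hj
    have h2 : 0 < countLT univ j := card_pos.2 ⟨i, by simpa using hij⟩
    simp only [countLT] at h1 h2
    omega
  · simp only [coe_filter, mem_univ, true_and, Set.mem_ofPred_eq, coe_erase, Set.mem_sdiff,
      Set.mem_singleton_iff] at hy ⊢
    refine ⟨?_, fun hi => (hy.trans h).ne (by simp [← hi])⟩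
    by_contra hge
    rcases (not_lt.1 hge).eq_or_lt with heq | hlt
    · exact hy.ne (by simp [heq])
    · exact (H _ hlt).not_gt (by simpa using hy)

variable {σ τ : Equiv.Perm (Fin n)}

lemma Avoids321.strictMonoOn_excSet (hσ : Avoids321 σ) : StrictMonoOn σ (excSet σ) := by
  intro i hi j hj hij
  by_contra hle
  have h : σ j < σ i := (not_lt.1 hle).lt_of_ne (σ.injective.ne hij.ne')
  obtain ⟨k, hjk, hk⟩ := exists_gt_apply_lt σ hij (mem_excSet.1 hj).le h
  exact hσ ⟨i, j, k, hij, hjk, hk, h⟩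

lemma Avoids321.strictMonoOn_compl_excSet (hσ : Avoids321 σ) :
    StrictMonoOn σ ↑(excSet σ)ᶜ := by
  intro i hi j hj hij
  simp only [coe_compl, Set.mem_compl_iff, mem_coe, mem_excSet, not_lt] at hi hj
  by_contra hle
  have h : σ j < σ i := (not_lt.1 hle).lt_of_ne (σ.injective.ne hij.ne')
  -- `exists_gt_apply_lt` read in the order dual
  obtain ⟨k, hki, hk⟩ := exists_gt_apply_lt (α := (Fin n)ᵒᵈ) σ (i := OrderDual.toDual j)
    (j := OrderDual.toDual i) hij hi h
  exact hσ ⟨k, i, j, hki, hij, h, hk⟩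

lemma avoids321_of_strictMonoOn {s : Finset (Fin n)} (hs : StrictMonoOn σ s)
    (hsc : StrictMonoOn σ ↑sᶜ) : Avoids321 σ := by
  rintro ⟨i, j, k, hij, hjk, hkj, hji⟩
  have key : ∀ a b, a < b → (a ∈ s ↔ b ∈ s) → σ a < σ b := by
    intro a b hab hs'
    by_cases ha : a ∈ s
    · exact hs ha (hs'.1 ha) hab
    · exact hsc (by simpa using ha) (by simpa [← hs'] using ha) hab
  have : (i ∈ s ↔ j ∈ s) ∨ (j ∈ s ↔ k ∈ s) ∨ (i ∈ s ↔ k ∈ s) := by tauto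
  rcases this with h | h | h
  · exact (key i j hij h).not_gt hji
  · exact (key j k hjk h).not_gt hkj
  · exact (key i k (hij.trans hjk) h).not_gt (hkj.trans hji)

lemma Avoids321.eq_of_excSet_eq (hσ : Avoids321 σ) (hτ : Avoids321 τ)
    (hP : excSet σ = excSet τ) (hV : excValSet σ = excValSet τ) : σ = τ := by
  have himg : (excSet σ).image σ = (excSet σ).image τ := by
    rw [image_excSet, hP, image_excSet, hV]
  ext i
  by_cases hi : i ∈ excSet σ
  · rw [eqOn_of_strictMonoOn_of_image_eq hσ.strictMonoOn_excSet
      (hP ▸ hτ.strictMonoOn_excSet) himg hi]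
  · rw [eqOn_of_strictMonoOn_of_image_eq hσ.strictMonoOn_compl_excSet
      (hP ▸ hτ.strictMonoOn_compl_excSet) (by rw [image_compl_perm, image_compl_perm, himg])
      (mem_compl.2 hi)]

end Avoids321

section Statistics

variable (σ : Equiv.Perm (Fin n))

lemma exc_eq_card_excSet : exc σ = #(excSet σ) := rfl

lemma cpk_eq_card_sdiff : cpk σ = #(excValSet σ \ excSet σ) := by
  rw [cpk]
  congr 1
  ext x
  rw [mem_filter, mem_sdiff, mem_excValSet, mem_excSet, not_lt]
  refine (and_iff_right (mem_univ x)).trans ?_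
  refine and_congr_right fun hx => ⟨le_of_lt, fun h => h.lt_of_ne fun heq => hx.ne ?_⟩
  rw [Equiv.Perm.inv_eq_iff_eq, heq]

lemma cda_eq_card_inter : cda σ = #(excSet σ ∩ excValSet σ) := by
  rw [cda]
  congr 1
  ext x
  simp only [mem_filter, mem_univ, true_and, mem_inter, mem_excValSet, mem_excSet, and_comm]

lemma fixc_eq_card_filter : fixc σ = #{x ∈ (excSet σ ∪ excValSet σ)ᶜ | σ x = x} := by
  rw [fixc]
  congr 1
  ext x
  simp only [mem_filter, mem_univ, true_and]
  refine ⟨fun h => ⟨?_, h⟩, And.right⟩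
  simp [mem_excSet, mem_excValSet, Equiv.Perm.inv_eq_iff_eq.2 h.symm, h]

lemma cdd_eq_card_filter : cdd σ = #{x ∈ (excSet σ ∪ excValSet σ)ᶜ | σ x ≠ x} := by
  rw [cdd]
  congr 1
  ext x
  simp only [mem_filter, mem_univ, true_and, mem_compl, mem_union, mem_excSet, mem_excValSet,
    not_or, not_lt]
  have : σ⁻¹ x = x ↔ σ x = x := by rw [Equiv.Perm.inv_eq_iff_eq, eq_comm]
  constructor
  · rintro ⟨h1, h2⟩
    exact ⟨⟨h2.le, h1.le⟩, h2.ne⟩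
  · rintro ⟨⟨h1, h2⟩, h3⟩
    exact ⟨h2.lt_of_ne (mt this.1 h3 ∘ Eq.symm), h1.lt_of_ne h3⟩

lemma exc_eq_cpk_add_cda : exc σ = cpk σ + cda σ := by
  rw [exc_eq_card_excSet, cpk_eq_card_sdiff, cda_eq_card_inter, inter_comm,
    card_sdiff_add_card_inter, ← image_excSet, card_image_of_injective _ σ.injective]

lemma card_eq_two_mul_cpk_add : n = 2 * cpk σ + cda σ + fixc σ + cdd σ := by
  have h1 := card_add_card_compl (excSet σ ∪ excValSet σ)
  have h2 := card_filter_add_card_filter_not (s := (excSet σ ∪ excValSet σ)ᶜ)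
    (fun x => σ x = x)
  simp only [← ne_eq] at h2
  have h3 := card_sdiff_add_card (excValSet σ) (excSet σ)
  have h4 := exc_eq_cpk_add_cda σ
  rw [Fintype.card_fin] at h1
  rw [union_comm] at h3
  rw [exc_eq_card_excSet] at h4
  rw [fixc_eq_card_filter, cdd_eq_card_filter, cpk_eq_card_sdiff]
  rw [cpk_eq_card_sdiff] at h4
  omega

variable {σ}

lemma Avoids321.apply_eq_self_iff (hσ : Avoids321 σ) {x : Fin n}
    (hx : x ∈ (excSet σ ∪ excValSet σ)ᶜ) :
    σ x = x ↔ countLT (excSet σ) x = countLT (excValSet σ) x := by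
  simp only [mem_compl, mem_union, not_or] at hx
  have hrank := countLT_image_of_strictMonoOn hσ.strictMonoOn_compl_excSet (mem_compl.2 hx.1)
  have hσx : σ x ∈ (excValSet σ)ᶜ := by
    rw [← image_excSet, ← image_compl_perm]; exact mem_image_of_mem σ (mem_compl.2 hx.1)
  rw [image_compl_perm, image_excSet] at hrank
  have h1 := countLT_add_countLT_compl (excSet σ) x
  have h2 := countLT_add_countLT_compl (excValSet σ) x
  constructor
  · intro h
    rw [h] at hrank
    omega
  · intro h
    exact countLT_injOn _ hσx (mem_compl.2 hx.2) (by omega)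

lemma Avoids321.fixc_eq (hσ : Avoids321 σ) : fixc σ = #(fixSet (excSet σ) (excValSet σ)) := by
  rw [fixc_eq_card_filter, fixSet]
  exact congrArg card (filter_congr fun x hx => hσ.apply_eq_self_iff hx)

lemma Avoids321.cdd_eq (hσ : Avoids321 σ) : cdd σ = #(cddSet (excSet σ) (excValSet σ)) := by
  rw [cdd_eq_card_filter, cddSet]
  exact congrArg card (filter_congr fun x hx => (hσ.apply_eq_self_iff hx).not)

lemma Avoids321.card_crossing_add (hσ : Avoids321 σ) (i : Fin n) :
    #{j | (j < i ∧ i < σ j ∧ σ j < σ i) ∨ (σ i < σ j ∧ σ j ≤ i ∧ i < j)}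
      + countLE (excValSet σ) i = countLT (excSet σ) i := by
  by_cases hi : i < σ i
  · rw [← card_filter_excSet_add_countLE σ i]
    congr 2
    ext j
    simp only [mem_filter, mem_univ, true_and, mem_excSet]
    constructor
    · rintro (⟨hji, hij, -⟩ | ⟨hlt, hji, -⟩)
      · exact ⟨hji.trans hij, hji, hij⟩
      · exact absurd (hi.trans (hlt.trans_le hji)) (lt_irrefl i)
    · rintro ⟨hj, hji, hij⟩
      exact Or.inl ⟨hji, hij, hσ.strictMonoOn_excSet (mem_excSet.2 hj) (mem_excSet.2 hi) hji⟩
  · have h := card_filter_compl_excSet_add_countLE σ i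
    have h1 := countLE_add_countLE_compl (excSet σ) i
    have h2 := countLE_add_countLE_compl (excValSet σ) i
    rw [countLE_of_notMem (mem_excSet.not.2 hi)] at h1
    suffices #{j | (j < i ∧ i < σ j ∧ σ j < σ i) ∨ (σ i < σ j ∧ σ j ≤ i ∧ i < j)}
        = #{j ∈ (excSet σ)ᶜ | i < j ∧ σ j ≤ i} by omega
    congr 1
    ext j
    simp only [mem_filter, mem_univ, true_and, mem_compl, mem_excSet, not_lt]
    constructor
    · rintro (⟨-, hij, hji⟩ | ⟨-, hji, hij⟩)
      · exact absurd (hij.trans hji) hi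
      · exact ⟨hji.trans hij.le, hij, hji⟩
    · rintro ⟨hj, hij, hji⟩
      refine Or.inr ⟨hσ.strictMonoOn_compl_excSet ?_ ?_ hij, hji, hij⟩
      exacts [by simpa [mem_excSet] using hi, by simpa [mem_excSet] using hj]

lemma Avoids321.cros_add_exc (hσ : Avoids321 σ) :
    cros σ + exc σ = area (excSet σ) (excValSet σ) := by
  have hcros : cros σ = ∑ i,
      #{j | (j < i ∧ i < σ j ∧ σ j < σ i) ∨ (σ i < σ j ∧ σ j ≤ i ∧ i < j)} := by
    simp only [cros, card_filter, Fintype.sum_prod_type]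
  rw [hcros, exc, card_filter, ← sum_add_distrib, area]
  refine sum_congr rfl fun i _ => ?_
  have h1 := hσ.card_crossing_add i
  have h2 := (dominated_excSet σ).2 i
  by_cases hi : i < σ i
  · rw [if_pos hi, countLE_of_mem (mem_excSet.2 hi)]; omega
  · rw [if_neg hi, countLE_of_notMem (mem_excSet.not.2 hi)]; omega

end Statistics

lemma sum_avoids321_eq_sum_dominatedPairs (F : ℕ → ℕ → ℕ → ℕ → ℕ → ℝ) :
    ∑ σ ∈ univ.filter (fun σ : Equiv.Perm (Fin n) => Avoids321 σ),
        F (cros σ + exc σ) (fixc σ) (cpk σ) (cda σ) (cdd σ)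
      = ∑ pv ∈ dominatedPairs (Fin n), F (area pv.1 pv.2) #(fixSet pv.1 pv.2) #(pv.2 \ pv.1)
          #(pv.1 ∩ pv.2) #(cddSet pv.1 pv.2) := by
  refine sum_nbij (fun σ => (excSet σ, excValSet σ))
    (fun σ _ => mem_dominatedPairs.2 (dominated_excSet σ)) ?_ ?_ ?_
  · intro σ hσ τ hτ h
    simp only [coe_filter, mem_univ, true_and, Set.mem_ofPred_eq, Prod.mk.injEq] at hσ hτ h
    exact hσ.eq_of_excSet_eq hτ h.1 h.2
  · rintro ⟨P, V⟩ hpv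
    have hd := mem_dominatedPairs.1 hpv
    obtain ⟨τ, himg, hP, hPc⟩ := exists_perm_strictMonoOn_of_card_eq hd.1
    have hexc := excSet_eq_of_strictMonoOn hd himg hP hPc
    refine ⟨τ, by simpa using avoids321_of_strictMonoOn hP hPc, ?_⟩
    simp only [← image_excSet, hexc, himg]
  · intro σ hσ
    obtain ⟨-, hσ⟩ := mem_filter.1 hσ
    rw [hσ.cros_add_exc, hσ.fixc_eq, cpk_eq_card_sdiff, cda_eq_card_inter, hσ.cdd_eq]

theorem sum_avoids321_cda_cdd_eq (g : ℕ → ℕ → ℕ → ℝ) {u v u' v' : ℝ}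
    (h : u + v = u' + v') :
    ∑ σ ∈ univ.filter (fun σ : Equiv.Perm (Fin n) => Avoids321 σ),
        g (cros σ + exc σ) (fixc σ) (cpk σ) * u ^ cda σ * v ^ cdd σ
      = ∑ σ ∈ univ.filter (fun σ : Equiv.Perm (Fin n) => Avoids321 σ),
        g (cros σ + exc σ) (fixc σ) (cpk σ) * u' ^ cda σ * v' ^ cdd σ := by
  have key : ∀ u v : ℝ, ∑ σ ∈ univ.filter (fun σ : Equiv.Perm (Fin n) => Avoids321 σ),
        g (cros σ + exc σ) (fixc σ) (cpk σ) * u ^ cda σ * v ^ cdd σ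
      = ∑ pv ∈ dominatedPairs (Fin n) with cddSet pv.1 pv.2 = ∅,
        g (area pv.1 pv.2) #(fixSet pv.1 pv.2) #(pv.2 \ pv.1) * (u + v) ^ #(pv.1 ∩ pv.2) :=
    fun u v => (sum_avoids321_eq_sum_dominatedPairs fun c f p d w => g c f p * u ^ d * v ^ w).trans
      (sum_dominatedPairs_toggle g u v)
  rw [key, key, h]

lemma weight_identity {q r t y z a b c : ℝ} (hab : z * z * a * b = t * q) (hb : z * b = q * y)
    (hc : z * c = r) {N cr p d f w : ℕ} (hN : N = 2 * p + d + f + w) :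
    z ^ N * (q ^ cr * a ^ p * b ^ (p + d) * c ^ f)
      = q ^ (cr + (p + d)) * r ^ f * t ^ p * y ^ d * z ^ w := by
  calc z ^ N * (q ^ cr * a ^ p * b ^ (p + d) * c ^ f)
      = q ^ cr * (z * z * a * b) ^ p * (z * b) ^ d * (z * c) ^ f * z ^ w := by rw [hN]; ring
    _ = _ := by rw [hab, hb, hc]; ring

theorem stmt10_general (n : ℕ) (q r x t : ℝ) (h : (1 + x) * (x + t) * (1 + x * t) ≠ 0) :
    ∑ σ ∈ Finset.univ.filter (fun σ : Equiv.Perm (Fin n) => Avoids321 σ),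
        q ^ cros σ * (t * q) ^ exc σ * r ^ fixc σ =
      ((1 + x * t) / (1 + x)) ^ n *
        ∑ σ ∈ Finset.univ.filter (fun σ : Equiv.Perm (Fin n) => Avoids321 σ),
          q ^ cros σ * ((1 + x) ^ 2 * t / ((x + t) * (1 + x * t))) ^ cpk σ *
            (q * (x + t) / (1 + x * t)) ^ exc σ *
            ((1 + x) * r / (1 + x * t)) ^ fixc σ := by
  have h1 : 1 + x ≠ 0 := left_ne_zero_of_mul (left_ne_zero_of_mul h)
  have h2 : x + t ≠ 0 := right_ne_zero_of_mul (left_ne_zero_of_mul h)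
  have h3 : 1 + x * t ≠ 0 := right_ne_zero_of_mul h
  have hyz : t + 1 = (x + t) / (1 + x) + (1 + x * t) / (1 + x) := by field_simp; ring
  rw [mul_sum]
  calc _ = ∑ σ ∈ univ.filter (fun σ : Equiv.Perm (Fin n) => Avoids321 σ),
        q ^ (cros σ + exc σ) * r ^ fixc σ * t ^ cpk σ * t ^ cda σ * 1 ^ cdd σ :=
        sum_congr rfl fun σ _ => by rw [exc_eq_cpk_add_cda]; ring
    _ = _ := sum_avoids321_cda_cdd_eq (fun c f p => q ^ c * r ^ f * t ^ p) hyz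
    _ = _ := sum_congr rfl fun σ _ => by
        rw [exc_eq_cpk_add_cda]
        refine (weight_identity ?_ ?_ ?_ (card_eq_two_mul_cpk_add σ)).symm <;> field_simp

theorem stmt10 (n : ℕ) (hn : 1 ≤ n) (q r x t : ℝ) (h : (1 + x) * (x + t) * (1 + x * t) ≠ 0) :
    ∑ σ ∈ Finset.univ.filter (fun σ : Equiv.Perm (Fin n) => Avoids321 σ),
        q ^ cros σ * (t * q) ^ exc σ * r ^ fixc σ =
      ((1 + x * t) / (1 + x)) ^ n *
        ∑ σ ∈ Finset.univ.filter (fun σ : Equiv.Perm (Fin n) => Avoids321 σ),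
          q ^ cros σ * ((1 + x) ^ 2 * t / ((x + t) * (1 + x * t))) ^ cpk σ *
            (q * (x + t) / (1 + x * t)) ^ exc σ *
            ((1 + x) * r / (1 + x * t)) ^ fixc σ :=
  stmt10_general n q r x t h

end EulerExc
end
end

section
/- For every integer n ≥ 0 and all real numbers y and t, one has Σ_{σ∈B_n} y^{neg σ} t^{des_B σ} = Σ_{σ∈B_n} y^{neg σ} t^{exc_B σ}; that is, the pair of statistics (neg, des_B) on the hyperoctahedral group B_n is jointly equidistributed with (neg, exc_B). -/
open Finset

open scoped Classical

noncomputable section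

namespace EulerExc

variable {n : ℕ}

/-! Both statistics obey the same insertion recursion. Each element of `B_{n+1}` arises exactly once
from some `x ∈ B_n` by putting the new largest letter `±(n+1)` at one of the `n + 1` positions (for
excedances via the transposition `(c, n+1)`, for descents by inserting it into the word). This
raises `neg` by the sign bit; at the last position it raises the statistic `st` by the sign bit too,
while of the other `n` positions exactly `st x` leave it unchanged and the remaining `n - st x`
raise it by one. So the joint distributions of `(neg, desB)` and `(neg, excB)` over `B_{n+1}` are
the same linear image of those over `B_n`, and induction on `n` concludes. -/

open Equiv

variable {M : Type*} [AddCommMonoid M]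

lemma card_filter_univ_castSucc (p : Fin (n + 1) → Prop) [DecidablePred p] :
    #{i | p i} = #{i : Fin n | p i.castSucc} + if p (Fin.last n) then 1 else 0 := by
  simp only [card_filter, Fin.sum_univ_castSucc]

abbrev SignedPerm (n : ℕ) := Perm (Fin n) × (Fin n → Bool)

def extendLast (σ : Perm (Fin n)) : Perm (Fin (n + 1)) :=
  finSuccEquivLast.symm.permCongr σ.optionCongr

@[simp] lemma extendLast_last (σ : Perm (Fin n)) : extendLast σ (Fin.last n) = Fin.last n := by
  simp [extendLast]

@[simp] lemma extendLast_castSucc (σ : Perm (Fin n)) (i : Fin n) :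
    extendLast σ i.castSucc = (σ i).castSucc := by
  simp [extendLast]

lemma extendLast_injective : Function.Injective (extendLast (n := n)) :=
  (permCongr _).injective.comp optionCongr_injective

/-- The signed permutation `x ⊕ (±(n+1))`, precomposed with `π`: when `π c = n + 1`, this puts the
new largest letter, with sign `b`, at position `c`. -/
def insertMax (π : Perm (Fin (n + 1))) (x : SignedPerm n) (b : Bool) : SignedPerm (n + 1) :=
  (extendLast x.1 * π, Fin.snoc (α := fun _ => Bool) x.2 b ∘ π)

lemma insertMax_injective (π : Fin (n + 1) → Perm (Fin (n + 1)))
    (hπ : ∀ c, π c c = Fin.last n) :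
    Function.Injective fun y : SignedPerm n × Fin (n + 1) × Bool =>
      insertMax (π y.2.1) y.1 y.2.2 := by
  rintro ⟨⟨σ, ε⟩, c, b⟩ ⟨⟨σ', ε'⟩, c', b'⟩ h
  simp only [insertMax, Prod.mk.injEq] at h
  obtain ⟨hσ, hε⟩ := h
  have hpos : ∀ (σ : Perm (Fin n)) c, (extendLast σ * π c)⁻¹ (Fin.last n) = c := fun σ c => by
    rw [Perm.inv_eq_iff_eq, Perm.mul_apply, hπ, extendLast_last]
  obtain rfl : c = c' := by rw [← hpos σ c, hσ, hpos]
  obtain rfl : σ = σ' := extendLast_injective (mul_right_cancel hσ)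
  obtain ⟨rfl, rfl⟩ := Fin.snoc_injective2 ((π c).surjective.injective_comp_right hε)
  rfl

lemma insertMax_bijective (π : Fin (n + 1) → Perm (Fin (n + 1)))
    (hπ : ∀ c, π c c = Fin.last n) :
    Function.Bijective fun y : SignedPerm n × Fin (n + 1) × Bool =>
      insertMax (π y.2.1) y.1 y.2.2 := by
  refine (Fintype.bijective_iff_injective_and_card _).2 ⟨insertMax_injective π hπ, ?_⟩
  simp only [Fintype.card_prod, Fintype.card_perm, Fintype.card_fun, Fintype.card_fin,
    Fintype.card_bool, Nat.factorial_succ, pow_succ]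
  ring

lemma negB_comp_perm (ε : Fin n → Bool) (π : Perm (Fin n)) : negB (ε ∘ π) = negB ε := by
  simp only [negB, card_filter]
  exact Equiv.sum_comp π (fun i => if ε i = true then 1 else 0)

lemma negB_snoc (ε : Fin n → Bool) (b : Bool) :
    negB (Fin.snoc (α := fun _ => Bool) ε b) = negB ε + b.toNat := by
  simp only [negB, card_filter, Fin.sum_univ_castSucc, Fin.snoc_castSucc, Fin.snoc_last]
  cases b <;> rfl

lemma negB_insertMax (π : Perm (Fin (n + 1))) (x : SignedPerm n) (b : Bool) :
    negB (insertMax π x b).2 = negB x.2 + b.toNat := by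
  rw [insertMax, negB_comp_perm, negB_snoc]

/-- The transfer operator of the common recursion: from `(neg, st) = (s, d)` on `B_n`, the `2(n+1)`
insertions of `±(n+1)` produce these values on `B_{n+1}`. -/
def insertionStep (f : ℕ → ℕ → M) (n s d : ℕ) : M :=
  f s d + f (s + 1) (d + 1) + d • (f s d + f (s + 1) d)
    + (n - d) • (f s (d + 1) + f (s + 1) (d + 1))

lemma sum_fin_succ_of_slots (g : ℕ → M) (P : Fin n → Prop) [DecidablePred P]
    (k : Fin (n + 1) → ℕ) (d e : ℕ) (hd : #{i | P i} = d) (hlast : k (Fin.last n) = d + e)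
    (hcast : ∀ i, k i.castSucc = d + if P i then 0 else 1) :
    ∑ c, g (k c) = g (d + e) + d • g d + (n - d) • g (d + 1) := by
  have hnot : #{i | ¬ P i} = n - d := by
    rw [← hd, filter_not, card_sdiff_of_subset (filter_subset _ _), card_univ, Fintype.card_fin]
  simp only [Fin.sum_univ_castSucc, hlast, hcast, apply_ite, add_zero, sum_ite, sum_const, hd,
    hnot]
  abel

theorem sum_insertMax_eq_sum_insertionStep (π : Fin (n + 1) → Perm (Fin (n + 1)))
    (hπ : ∀ c, π c c = Fin.last n) (st : SignedPerm n → ℕ) (st' : SignedPerm (n + 1) → ℕ)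
    (P : SignedPerm n → Fin n → Prop) [∀ x, DecidablePred (P x)]
    (hcard : ∀ x, #{i | P x i} = st x)
    (hlast : ∀ x b, st' (insertMax (π (Fin.last n)) x b) = st x + b.toNat)
    (hcast : ∀ x b i, st' (insertMax (π i.castSucc) x b) = st x + if P x i then 0 else 1)
    (f : ℕ → ℕ → M) :
    ∑ y : SignedPerm (n + 1), f (negB y.2) (st' y) =
      ∑ x : SignedPerm n, insertionStep f n (negB x.2) (st x) := by
  rw [← (insertMax_bijective π hπ).sum_comp (fun y => f (negB y.2) (st' y)),
    Fintype.sum_prod_type]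
  refine sum_congr rfl fun x _ => ?_
  have hslots : ∀ b : Bool, ∑ c, f (negB x.2 + b.toNat) (st' (insertMax (π c) x b)) =
      f (negB x.2 + b.toNat) (st x + b.toNat) + st x • f (negB x.2 + b.toNat) (st x)
        + (n - st x) • f (negB x.2 + b.toNat) (st x + 1) := fun b =>
    sum_fin_succ_of_slots _ (P x) _ _ _ (hcard x) (hlast x b) (hcast x b)
  simp only [Fintype.sum_prod_type_right, Fintype.sum_bool, negB_insertMax, hslots,
    insertionStep, Bool.toNat_true, Bool.toNat_false, add_zero, smul_add]
  abel

lemma excB_insertMax_last (x : SignedPerm n) (b : Bool) :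
    excB (insertMax (swap (Fin.last n) (Fin.last n)) x b).1
      (insertMax (swap (Fin.last n) (Fin.last n)) x b).2 = excB x.1 x.2 + b.toNat := by
  simp only [insertMax, swap_self, ← Perm.one_def, mul_one, Perm.coe_one, Function.comp_id, excB,
    card_filter_univ_castSucc, extendLast_castSucc, extendLast_last, Fin.snoc_castSucc,
    Fin.snoc_last, Fin.castSucc_lt_castSucc_iff, Fin.castSucc_inj, lt_irrefl, true_and, false_or]
  cases b <;> rfl

lemma excB_insertMax_castSucc (x : SignedPerm n) (b : Bool) (c : Fin n) :
    excB (insertMax (swap c.castSucc (Fin.last n)) x b).1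
      (insertMax (swap c.castSucc (Fin.last n)) x b).2 =
      excB x.1 x.2 + if c < x.1 c ∨ (x.1 c = c ∧ x.2 c = true) then 0 else 1 := by
  have hswap : ∀ i : Fin n,
      swap c.castSucc (Fin.last n) i.castSucc = if i = c then Fin.last n else i.castSucc := by
    intro i
    split_ifs with hi
    · rw [hi, swap_apply_left]
    · exact swap_apply_of_ne_of_ne (by simpa using hi) (Fin.castSucc_ne_last i)
  calc _ = #(insert c ({i | i < x.1 i ∨ (x.1 i = i ∧ x.2 i = true)} : Finset (Fin n))) + 0 := by
        rw [excB, insertMax, card_filter_univ_castSucc]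
        congr 1
        · congr 1
          ext i
          by_cases hi : i = c <;> simp [hi, hswap]
        · simp [(Fin.castSucc_lt_last _).le]
    _ = _ := by
        rw [card_insert_eq_ite, excB]
        simp only [mem_filter, mem_univ, true_and]
        split_ifs <;> rfl

theorem sum_excB_succ (f : ℕ → ℕ → M) :
    ∑ y : SignedPerm (n + 1), f (negB y.2) (excB y.1 y.2) =
      ∑ x : SignedPerm n, insertionStep f n (negB x.2) (excB x.1 x.2) :=
  sum_insertMax_eq_sum_insertionStep (fun c => swap c (Fin.last n)) (fun _ => swap_apply_left _ _)
    _ _ _ (fun _ => rfl) excB_insertMax_last excB_insertMax_castSucc f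

section Descents

variable {α : Type*}

def descents [LT α] [DecidableLT α] (w : ℕ → α) (n : ℕ) : Finset ℕ :=
  {i ∈ range n | w (i + 1) < w i}

/-- `w` with the letter `a` inserted at index `p + 1`. -/
def insertAt (w : ℕ → α) (p : ℕ) (a : α) (k : ℕ) : α :=
  if k ≤ p then w k else if k = p + 1 then a else w (k - 1)

lemma insertAt_of_le (w : ℕ → α) {p k : ℕ} (a : α) (hk : k ≤ p) : insertAt w p a k = w k :=
  if_pos hk

@[simp] lemma insertAt_succ_self (w : ℕ → α) (p : ℕ) (a : α) : insertAt w p a (p + 1) = a := by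
  simp [insertAt]

lemma insertAt_of_succ_lt (w : ℕ → α) {p k : ℕ} (a : α) (hk : p + 1 < k) :
    insertAt w p a k = w (k - 1) := by
  rw [insertAt, if_neg (by omega), if_neg (by omega)]

variable [LT α] [DecidableLT α]

lemma card_descents_insertAt_self (w : ℕ → α) (n : ℕ) (a : α) :
    #(descents (insertAt w n a) (n + 1)) = #(descents w n) + if a < w n then 1 else 0 := by
  simp only [descents, card_filter, sum_range_succ, insertAt_succ_self, insertAt_of_le w a le_rfl]
  congr 1
  refine sum_congr rfl fun i hi => ?_
  have hi : i < n := mem_range.1 hi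
  rw [insertAt_of_le w a hi.le, insertAt_of_le w a hi]

lemma card_descents_insertAt_of_lt (w : ℕ → α) {p n : ℕ} (hp : p < n) (a : α) :
    #(descents (insertAt w p a) (n + 1)) + (if w (p + 1) < w p then 1 else 0) =
      #(descents w n) + (if a < w p then 1 else 0) + (if w (p + 1) < a then 1 else 0) := by
  obtain ⟨m, rfl⟩ : ∃ m, n = p + 1 + m := ⟨n - p - 1, by omega⟩
  simp only [descents, card_filter]
  rw [show p + 1 + m + 1 = p + 1 + (m + 1) by ring, sum_range_add _ (p + 1) (m + 1),
    sum_range_add _ (p + 1) m, sum_range_succ _ p, sum_range_succ _ p, sum_range_succ' _ m]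
  have hbefore : ∀ i ∈ range p, (if insertAt w p a (i + 1) < insertAt w p a i then 1 else 0) =
      if w (i + 1) < w i then 1 else 0 := fun i hi => by
    have hi : i < p := mem_range.1 hi
    rw [insertAt_of_le w a hi.le, insertAt_of_le w a hi]
  have hafter : ∀ j ∈ range m,
      (if insertAt w p a (p + 1 + (j + 1) + 1) < insertAt w p a (p + 1 + (j + 1)) then 1 else 0) =
      if w (p + 1 + j + 1) < w (p + 1 + j) then 1 else 0 := fun j _ => by
    rw [insertAt_of_succ_lt w a (by omega), insertAt_of_succ_lt w a (by omega)]
    rfl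
  rw [sum_congr rfl hbefore, sum_congr rfl hafter, add_zero, insertAt_succ_self,
    insertAt_of_le w a le_rfl, insertAt_of_succ_lt w a (by omega), Nat.add_sub_cancel]
  omega

end Descents

def shiftToLast (p : Fin (n + 1)) : Perm (Fin (n + 1)) :=
  (Fin.cycleRange (Fin.last n))⁻¹ * p.cycleRange

lemma shiftToLast_self (p : Fin (n + 1)) : shiftToLast p p = Fin.last n := by
  rw [shiftToLast, Perm.mul_apply, Fin.cycleRange_self, Perm.inv_def, Fin.cycleRange_symm_zero]

lemma shiftToLast_succAbove (p : Fin (n + 1)) (j : Fin n) :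
    shiftToLast p (p.succAbove j) = j.castSucc := by
  rw [shiftToLast, Perm.mul_apply, Fin.cycleRange_succAbove, Perm.inv_def,
    Fin.cycleRange_symm_succ, Fin.succAbove_last]

def signedEntry (x : SignedPerm n) (i : Fin n) : ℤ :=
  if x.2 i then -((x.1 i : ℕ) + 1 : ℤ) else ((x.1 i : ℕ) + 1 : ℤ)

lemma signedVal_zero (σ : Perm (Fin n)) (ε : Fin n → Bool) : signedVal σ ε 0 = 0 := rfl

lemma signedVal_succ (x : SignedPerm n) (i : Fin n) :
    signedVal x.1 x.2 (i + 1) = signedEntry x i := by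
  simp [signedVal, signedEntry, i.isLt]

lemma signedVal_of_lt (σ : Perm (Fin n)) (ε : Fin n → Bool) {k : ℕ} (hk : n < k) :
    signedVal σ ε k = 0 :=
  dif_neg (by omega)

lemma abs_signedEntry_le (x : SignedPerm n) (i : Fin n) : |signedEntry x i| ≤ n := by
  have := (x.1 i).isLt
  unfold signedEntry
  split_ifs <;> rw [abs_le] <;> constructor <;> omega

lemma abs_signedVal_le (x : SignedPerm n) (k : ℕ) : |signedVal x.1 x.2 k| ≤ n := by
  rcases k with _ | k
  · simp [signedVal_zero]
  by_cases hk : k < n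
  · exact (congrArg abs (signedVal_succ x ⟨k, hk⟩)).trans_le (abs_signedEntry_le x _)
  · simp [signedVal_of_lt x.1 x.2 (show n < k + 1 by omega)]

lemma signedVal_insertMax (x : SignedPerm n) (p : Fin (n + 1)) (b : Bool) :
    signedVal (insertMax (shiftToLast p) x b).1 (insertMax (shiftToLast p) x b).2 =
      insertAt (signedVal x.1 x.2) p (if b then -(n + 1 : ℤ) else n + 1) := by
  funext k
  rcases k with _ | k
  · rw [signedVal_zero, insertAt_of_le _ _ (Nat.zero_le _), signedVal_zero]
  by_cases hk : k < n + 1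
  swap
  · rw [signedVal_of_lt _ _ (by omega), insertAt_of_succ_lt _ _ (by omega),
      signedVal_of_lt _ _ (by omega)]
  obtain ⟨i, rfl⟩ : ∃ i : Fin (n + 1), (i : ℕ) = k := ⟨⟨k, hk⟩, rfl⟩
  rw [signedVal_succ]
  rcases eq_or_ne i p with rfl | hne
  · simp [signedEntry, insertMax, shiftToLast_self]
  obtain ⟨j, rfl⟩ := Fin.exists_succAbove_eq hne
  have hentry : signedEntry (insertMax (shiftToLast p) x b) (p.succAbove j) = signedEntry x j := by
    simp [signedEntry, insertMax, shiftToLast_succAbove]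
  rw [hentry]
  rcases lt_or_ge j.castSucc p with h | h
  · rw [Fin.succAbove_of_castSucc_lt _ _ h, Fin.val_castSucc,
      insertAt_of_le _ _ (show (j : ℕ) + 1 ≤ p from h), signedVal_succ]
  · rw [Fin.succAbove_of_le_castSucc _ _ h, Fin.val_succ,
      insertAt_of_succ_lt _ _ (by simpa [Fin.le_iff_val_le_val] using h), Nat.add_sub_cancel,
      signedVal_succ]

lemma desB_eq_card_descents (x : SignedPerm n) :
    desB x.1 x.2 = #(descents (signedVal x.1 x.2) n) :=
  rfl

lemma desB_eq_card_fin (x : SignedPerm n) :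
    desB x.1 x.2 = #{i : Fin n | signedVal x.1 x.2 (i + 1) < signedVal x.1 x.2 i} := by
  simp only [desB, card_filter]
  exact (Fin.sum_univ_eq_sum_range (fun i => if signedVal x.1 x.2 (i + 1) < signedVal x.1 x.2 i
    then 1 else 0) n).symm

lemma ite_lt_signedVal (x : SignedPerm n) (b : Bool) (k : ℕ) :
    (if (if b then -(n + 1 : ℤ) else n + 1) < signedVal x.1 x.2 k then 1 else 0) = b.toNat := by
  have := abs_le.1 (abs_signedVal_le x k)
  cases b <;> simp <;> omega

lemma ite_signedVal_lt (x : SignedPerm n) (b : Bool) (k : ℕ) :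
    (if signedVal x.1 x.2 k < (if b then -(n + 1 : ℤ) else n + 1) then 1 else 0) = (!b).toNat := by
  have := abs_le.1 (abs_signedVal_le x k)
  cases b <;> simp <;> omega

lemma desB_insertMax_last (x : SignedPerm n) (b : Bool) :
    desB (insertMax (shiftToLast (Fin.last n)) x b).1
      (insertMax (shiftToLast (Fin.last n)) x b).2 =
      desB x.1 x.2 + b.toNat := by
  rw [desB_eq_card_descents, signedVal_insertMax, Fin.val_last, card_descents_insertAt_self,
    ite_lt_signedVal, ← desB_eq_card_descents]

lemma desB_insertMax_castSucc (x : SignedPerm n) (b : Bool) (i : Fin n) :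
    desB (insertMax (shiftToLast i.castSucc) x b).1 (insertMax (shiftToLast i.castSucc) x b).2 =
      desB x.1 x.2 + if signedVal x.1 x.2 (i + 1) < signedVal x.1 x.2 i then 0 else 1 := by
  have key := card_descents_insertAt_of_lt (signedVal x.1 x.2) (p := i.castSucc) i.isLt
    (if b then -(n + 1 : ℤ) else n + 1)
  rw [← signedVal_insertMax x i.castSucc b, ← desB_eq_card_descents, ← desB_eq_card_descents,
    Fin.val_castSucc, ite_lt_signedVal, ite_signedVal_lt] at key
  -- whatever its sign, the letter `±(n+1)` forms exactly one descent with its two neighbours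
  have hsplit : b.toNat + (!b).toNat = 1 := by cases b <;> rfl
  split_ifs at key ⊢ <;> omega

theorem sum_desB_succ (f : ℕ → ℕ → M) :
    ∑ y : SignedPerm (n + 1), f (negB y.2) (desB y.1 y.2) =
      ∑ x : SignedPerm n, insertionStep f n (negB x.2) (desB x.1 x.2) :=
  sum_insertMax_eq_sum_insertionStep shiftToLast shiftToLast_self _ _ _
    (fun x => (desB_eq_card_fin x).symm) desB_insertMax_last desB_insertMax_castSucc f

theorem sum_negB_desB_eq_sum_negB_excB (n : ℕ) (f : ℕ → ℕ → M) :
    ∑ x : SignedPerm n, f (negB x.2) (desB x.1 x.2) =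
      ∑ x : SignedPerm n, f (negB x.2) (excB x.1 x.2) := by
  induction n generalizing f with
  | zero => simp [desB, excB]
  | succ n ih => rw [sum_desB_succ, sum_excB_succ, ih]

theorem stmt16 (n : ℕ) (y t : ℝ) :
    ∑ σ : Equiv.Perm (Fin n) × (Fin n → Bool),
        y ^ negB σ.2 * t ^ desB σ.1 σ.2 =
      ∑ σ : Equiv.Perm (Fin n) × (Fin n → Bool),
        y ^ negB σ.2 * t ^ excB σ.1 σ.2 :=
  sum_negB_desB_eq_sum_negB_excB n fun s d => y ^ s * t ^ d

end EulerExc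
end
end

section
/- For every integer n ≥ 1 and all real numbers y, t with (1+y)(y+t)(1+yt) ≠ 0, one has Σ_{σ∈B_n} y^{neg σ} t^{exc_B σ} = (1+yt)^n · Σ_{σ∈S_n} ((1+y)² t/((y+t)(1+yt)))^{cpk σ} · ((y+t)/(1+yt))^{exc σ}. -/
open Finset

open scoped Classical

noncomputable section

/-!
Classify each `x` by its cyclic neighbours `σ⁻¹ x` and `σ x` as a cyclic valley, peak, double
ascent, double descent or fixed point. Both sides of the identity are sums over `S_n` of products
over `x` of a weight depending only on the kind of `x`: on the left, once the signs are summed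
out, a fixed point contributes `1 + yt`, an excedance `t(1 + y)` and a drop `1 + y`.

Marking the five kinds by variables `v, p, a, d, f`, inserting a new minimum into a cycle shows
that the generating polynomial `P_m` of the kinds over `S_m` satisfies
`P_{m+1} = f P_m + v (a + d) ∂_v P_m + v p (∂_a + ∂_d + ∂_f) P_m`. This recurrence preserves the
algebra generated by `v p`, `a + d` and `f`, so the total weight depends only on
`w(valley) w(peak)`, `w(doubleAsc) + w(doubleDesc)` and `w(fixed)`, and these agree for the two
sides.
-/

open MvPolynomial Equiv

theorem Derivation.leibniz_prod {R A ι : Type*} [CommSemiring R] [CommSemiring A] [Algebra R A]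
    [DecidableEq ι] (D : Derivation R A A) (s : Finset ι) (g : ι → A) :
    D (∏ x ∈ s, g x) = ∑ x ∈ s, (∏ y ∈ s.erase x, g y) * D (g x) := by
  induction s using Finset.induction_on with
  | empty => simp
  | insert a s ha ih =>
    rw [Finset.prod_insert ha, Finset.sum_insert ha, Derivation.leibniz, ih, smul_eq_mul,
      smul_eq_mul, Finset.erase_insert ha, Finset.mul_sum, add_comm]
    congr 1
    refine Finset.sum_congr rfl fun x hx => ?_
    rw [Finset.erase_insert_of_ne (ne_of_mem_of_not_mem hx ha).symm,
      Finset.prod_insert fun h => ha (Finset.mem_of_mem_erase h)]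
    ring

namespace MvPolynomial

variable {R σ : Type*} [CommSemiring R]

theorem pderiv_aeval {τ : Type*} [Fintype τ] (g : τ → MvPolynomial σ R) (i : σ)
    (Q : MvPolynomial τ R) :
    pderiv i (aeval g Q) = ∑ k, aeval g (pderiv k Q) * pderiv i (g k) := by
  induction Q using MvPolynomial.induction_on with
  | C a => simp
  | add p q hp hq => rw [map_add, map_add, hp, hq, ← Finset.sum_add_distrib]; simp [add_mul]
  | mul_X p j ih =>
    simp only [map_mul, aeval_X, pderiv_mul, ih, pderiv_X, map_add, add_mul,
      Finset.sum_add_distrib, Finset.sum_mul]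
    congr 1
    · exact Finset.sum_congr rfl fun k _ => by ring
    · simp [Pi.single_apply]

theorem pderiv_prod_X {ι : Type*} [Fintype ι] [DecidableEq ι] (f : ι → σ) (i : σ) :
    pderiv i (∏ x, (X (f x) : MvPolynomial σ R)) =
      ∑ x, (∏ y ∈ Finset.univ.erase x, X (f y)) * if f x = i then 1 else 0 := by
  simp [Derivation.leibniz_prod, pderiv_X, Pi.single_apply]

end MvPolynomial

namespace Equiv.Perm

theorem sum_eq_sum_ite_le_inv_add_ite_lt {α M : Type*} [LinearOrder α] [Fintype α]
    [AddCommMonoid M] (τ : Perm α) (F : α → M) :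
    ∑ q, F q = ∑ x, ((if x ≤ τ⁻¹ x then F x else 0) + if x < τ x then F (τ x) else 0) := by
  have hsplit : ∀ q, F q = (if q ≤ τ⁻¹ q then F q else 0) + if τ⁻¹ q < q then F q else 0 := by
    intro q
    rcases le_or_gt q (τ⁻¹ q) with h | h
    · rw [if_pos h, if_neg (not_lt.2 h), add_zero]
    · rw [if_neg (not_le.2 h), if_pos h, zero_add]
  rw [Finset.sum_congr rfl fun q _ => hsplit q, Finset.sum_add_distrib, Finset.sum_add_distrib,
    ← Equiv.sum_comp τ (fun q => if τ⁻¹ q < q then F q else 0)]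
  simp

variable {m : ℕ} (τ : Perm (Fin m))

theorem decomposeFin_symm_zero_inv_apply_succ (x : Fin m) :
    (decomposeFin.symm (0, τ))⁻¹ x.succ = (τ⁻¹ x).succ := by
  rw [inv_eq_iff_eq, decomposeFin_symm_apply_succ]
  simp

-- `decomposeFin.symm (q.succ, τ)` inserts the new minimum `0` into the cycle of `τ` just
-- before `q`.
theorem decomposeFin_symm_succ_apply_succ (q x : Fin m) :
    decomposeFin.symm (q.succ, τ) x.succ = if τ x = q then 0 else (τ x).succ := by
  rw [decomposeFin_symm_apply_succ]
  split_ifs with h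
  · rw [h, swap_apply_right]
  · exact swap_apply_of_ne_of_ne (Fin.succ_ne_zero _) (by simpa using h)

theorem decomposeFin_symm_succ_inv_apply_zero (q : Fin m) :
    (decomposeFin.symm (q.succ, τ))⁻¹ 0 = (τ⁻¹ q).succ := by
  rw [inv_eq_iff_eq, decomposeFin_symm_succ_apply_succ, if_pos (by simp)]

theorem decomposeFin_symm_succ_inv_apply_succ (q y : Fin m) :
    (decomposeFin.symm (q.succ, τ))⁻¹ y.succ = if y = q then 0 else (τ⁻¹ y).succ := by
  rw [inv_eq_iff_eq]
  split_ifs with h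
  · rw [h, decomposeFin_symm_apply_zero]
  · rw [decomposeFin_symm_succ_apply_succ, if_neg (by simpa using h)]
    simp

end Equiv.Perm

namespace EulerExc

inductive CycKind
  | valley
  | peak
  | doubleAsc
  | doubleDesc
  | fixed

open CycKind

def CycKind.elim {S : Type*} (v p a d f : S) : CycKind → S
  | valley => v
  | peak => p
  | doubleAsc => a
  | doubleDesc => d
  | fixed => f

def cycKindOf (isFixed predAbove succAbove : Bool) : CycKind :=
  match isFixed, predAbove, succAbove with
  | true, _, _ => fixed
  | false, true, true => valley
  | false, true, false => doubleDesc
  | false, false, true => doubleAsc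
  | false, false, false => peak

section Kind

variable {α : Type*} [LinearOrder α]

def cycKind (σ : Perm α) (x : α) : CycKind :=
  cycKindOf (σ x = x) (x < σ⁻¹ x) (x < σ x)

theorem cycKind_congr {β : Type*} [LinearOrder β] {σ : Perm α} {τ : Perm β} {x : α} {y : β}
    (hfix : σ x = x ↔ τ y = y) (hpred : x < σ⁻¹ x ↔ y < τ⁻¹ y) (hsucc : x < σ x ↔ y < τ y) :
    cycKind σ x = cycKind τ y := by
  simp only [cycKind, decide_eq_decide.mpr hfix, decide_eq_decide.mpr hpred,
    decide_eq_decide.mpr hsucc]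

variable {σ : Perm α} {x : α}

theorem cycKind_eq_fixed (h : σ x = x) : cycKind σ x = fixed := by
  rw [cycKind, decide_eq_true h]; rfl

theorem cycKind_eq_valley (h₁ : x < σ⁻¹ x) (h₂ : x < σ x) : cycKind σ x = valley := by
  rw [cycKind, decide_eq_false h₂.ne', decide_eq_true h₁, decide_eq_true h₂]; rfl

theorem cycKind_eq_doubleAsc (h₁ : σ⁻¹ x < x) (h₂ : x < σ x) : cycKind σ x = doubleAsc := by
  rw [cycKind, decide_eq_false h₂.ne', decide_eq_false h₁.not_gt, decide_eq_true h₂]; rfl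

theorem cycKind_eq_doubleDesc (h₁ : x < σ⁻¹ x) (h₂ : σ x < x) : cycKind σ x = doubleDesc := by
  rw [cycKind, decide_eq_false h₂.ne, decide_eq_true h₁, decide_eq_false h₂.not_gt]; rfl

theorem cycKind_eq_peak (h₁ : σ⁻¹ x < x) (h₂ : σ x < x) : cycKind σ x = peak := by
  rw [cycKind, decide_eq_false h₂.ne, decide_eq_false h₁.not_gt, decide_eq_false h₂.not_gt]; rfl

variable (σ x) in
theorem cycKind_cases :
    (σ⁻¹ x = x ∧ σ x = x ∧ cycKind σ x = fixed) ∨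
    (x < σ⁻¹ x ∧ x < σ x ∧ cycKind σ x = valley) ∨
    (σ⁻¹ x < x ∧ x < σ x ∧ cycKind σ x = doubleAsc) ∨
    (x < σ⁻¹ x ∧ σ x < x ∧ cycKind σ x = doubleDesc) ∨
    (σ⁻¹ x < x ∧ σ x < x ∧ cycKind σ x = peak) := by
  by_cases hx : σ x = x
  · exact Or.inl ⟨by rw [Perm.inv_eq_iff_eq, hx], hx, cycKind_eq_fixed hx⟩
  have hx' : σ⁻¹ x ≠ x := fun h => hx (Perm.inv_eq_iff_eq.mp h).symm
  rcases lt_or_gt_of_ne hx with h | h <;> rcases lt_or_gt_of_ne hx' with h' | h'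
  · exact Or.inr (Or.inr (Or.inr (Or.inr ⟨h', h, cycKind_eq_peak h' h⟩)))
  · exact Or.inr (Or.inr (Or.inr (Or.inl ⟨h', h, cycKind_eq_doubleDesc h' h⟩)))
  · exact Or.inr (Or.inr (Or.inl ⟨h', h, cycKind_eq_doubleAsc h' h⟩))
  · exact Or.inr (Or.inl ⟨h', h, cycKind_eq_valley h' h⟩)

end Kind

section Insertion

variable {m : ℕ} (τ : Perm (Fin m))

theorem cycKind_decomposeFin_symm_zero_zero :
    cycKind (Perm.decomposeFin.symm (0, τ)) 0 = fixed := by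
  simp [cycKind, Perm.decomposeFin_symm_apply_zero, cycKindOf]

theorem cycKind_decomposeFin_symm_zero_succ (x : Fin m) :
    cycKind (Perm.decomposeFin.symm (0, τ)) x.succ = cycKind τ x :=
  cycKind_congr (by simp) (by simp [Perm.decomposeFin_symm_zero_inv_apply_succ]) (by simp)

theorem cycKind_decomposeFin_symm_succ_zero (q : Fin m) :
    cycKind (Perm.decomposeFin.symm (q.succ, τ)) 0 = valley := by
  simp [cycKind, Perm.decomposeFin_symm_apply_zero, Perm.decomposeFin_symm_succ_inv_apply_zero,
    cycKindOf, Fin.succ_pos]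

theorem cycKind_decomposeFin_symm_succ_succ {q y : Fin m} (hpred : y = q → τ⁻¹ y < y)
    (hsucc : τ y = q → τ y < y) :
    cycKind (Perm.decomposeFin.symm (q.succ, τ)) y.succ = cycKind τ y := by
  apply cycKind_congr
  · rw [Perm.decomposeFin_symm_succ_apply_succ]
    split_ifs with h
    · simp [(hsucc h).ne, (Fin.succ_ne_zero y).symm]
    · simp
  · rw [Perm.decomposeFin_symm_succ_inv_apply_succ]
    split_ifs with h
    · simpa using (hpred h).le
    · simp
  · rw [Perm.decomposeFin_symm_succ_apply_succ]
    split_ifs with h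
    · simpa using (hsucc h).le
    · simp

theorem cycKind_decomposeFin_symm_self_succ (x : Fin m) :
    cycKind (Perm.decomposeFin.symm (x.succ, τ)) x.succ = cycKindOf false false (x < τ x) := by
  rw [cycKind, Perm.decomposeFin_symm_succ_apply_succ, Perm.decomposeFin_symm_succ_inv_apply_succ,
    if_pos rfl]
  split_ifs with h <;> simp [h, (Fin.succ_ne_zero x).symm]

theorem cycKind_decomposeFin_symm_apply_succ {x : Fin m} (hx : x < τ x) :
    cycKind (Perm.decomposeFin.symm ((τ x).succ, τ)) x.succ =
      cycKindOf false (x < τ⁻¹ x) false := by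
  rw [cycKind, Perm.decomposeFin_symm_succ_apply_succ, Perm.decomposeFin_symm_succ_inv_apply_succ]
  simp [hx.ne, (Fin.succ_ne_zero x).symm]

variable {R : Type*} [CommSemiring R]

theorem prod_cycKind_decomposeFin_symm_self {x : Fin m} (hx : x ≤ τ⁻¹ x) :
    ∏ y : Fin m,
        (X (cycKind (Perm.decomposeFin.symm (x.succ, τ)) y.succ) : MvPolynomial CycKind R) =
      X (cycKindOf false false (x < τ x)) * ∏ y ∈ Finset.univ.erase x, X (cycKind τ y) := by
  rw [← Finset.mul_prod_erase _ _ (Finset.mem_univ x), cycKind_decomposeFin_symm_self_succ]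
  congr 1
  refine Finset.prod_congr rfl fun y hy => ?_
  have hyx := Finset.ne_of_mem_erase hy
  rw [cycKind_decomposeFin_symm_succ_succ τ (fun h => absurd h hyx) fun h => ?_]
  subst h
  exact lt_of_le_of_ne (by simpa using hx) (Ne.symm hyx)

theorem prod_cycKind_decomposeFin_symm_apply {x : Fin m} (hx : x < τ x) :
    ∏ y : Fin m,
        (X (cycKind (Perm.decomposeFin.symm ((τ x).succ, τ)) y.succ) : MvPolynomial CycKind R) =
      X (cycKindOf false (x < τ⁻¹ x) false) * ∏ y ∈ Finset.univ.erase x, X (cycKind τ y) := by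
  rw [← Finset.mul_prod_erase _ _ (Finset.mem_univ x), cycKind_decomposeFin_symm_apply_succ τ hx]
  congr 1
  refine Finset.prod_congr rfl fun y hy => ?_
  have hyx := Finset.ne_of_mem_erase hy
  rw [cycKind_decomposeFin_symm_succ_succ τ (fun h => ?_) fun h => absurd (τ.injective h) hyx]
  subst h
  simpa using hx

-- Inserting `0` before `q` changes the kind of `q` alone if `q ≤ τ⁻¹ q`, and of `τ⁻¹ q` alone
-- otherwise.
theorem sum_prod_cycKind_decomposeFin_symm_succ :
    ∑ q : Fin m, ∏ y : Fin m,
        (X (cycKind (Perm.decomposeFin.symm (q.succ, τ)) y.succ) : MvPolynomial CycKind R) =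
      (X doubleAsc + X doubleDesc) * pderiv valley (∏ x, X (cycKind τ x)) +
        X peak * (pderiv doubleAsc (∏ x, X (cycKind τ x)) +
          pderiv doubleDesc (∏ x, X (cycKind τ x)) + pderiv fixed (∏ x, X (cycKind τ x))) := by
  rw [Perm.sum_eq_sum_ite_le_inv_add_ite_lt τ]
  simp only [pderiv_prod_X, Finset.mul_sum, ← Finset.sum_add_distrib]
  refine Finset.sum_congr rfl fun x _ => ?_
  rcases cycKind_cases τ x with
    ⟨hx', hx, hk⟩ | ⟨h', h, hk⟩ | ⟨h', h, hk⟩ | ⟨h', h, hk⟩ | ⟨h', h, hk⟩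
  · rw [if_pos hx'.ge, if_neg (not_lt.2 hx.le), prod_cycKind_decomposeFin_symm_self τ hx'.ge,
      hk, decide_eq_false (not_lt.2 hx.le)]
    simp [cycKindOf]
  · rw [if_pos h'.le, if_pos h, prod_cycKind_decomposeFin_symm_self τ h'.le,
      prod_cycKind_decomposeFin_symm_apply τ h, hk, decide_eq_true h, decide_eq_true h']
    simp only [cycKindOf, ↓reduceIte, mul_one, reduceCtorEq, mul_zero, add_zero]
    ring
  · rw [if_neg h'.not_ge, if_pos h, prod_cycKind_decomposeFin_symm_apply τ h, hk,
      decide_eq_false h'.not_gt]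
    simp [cycKindOf]
  · rw [if_pos h'.le, if_neg h.not_gt, prod_cycKind_decomposeFin_symm_self τ h'.le, hk,
      decide_eq_false h.not_gt]
    simp [cycKindOf]
  · rw [if_neg h'.not_ge, if_neg h.not_gt, hk]
    simp

theorem sum_prod_cycKind_decomposeFin_symm :
    ∑ p, ∏ x, (X (cycKind (Perm.decomposeFin.symm (p, τ)) x) : MvPolynomial CycKind R) =
      X fixed * ∏ x, X (cycKind τ x) + X valley *
        ((X doubleAsc + X doubleDesc) * pderiv valley (∏ x, X (cycKind τ x)) +
          X peak * (pderiv doubleAsc (∏ x, X (cycKind τ x)) +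
            pderiv doubleDesc (∏ x, X (cycKind τ x)) + pderiv fixed (∏ x, X (cycKind τ x)))) := by
  simp only [Fin.sum_univ_succ, Fin.prod_univ_succ, cycKind_decomposeFin_symm_zero_zero,
    cycKind_decomposeFin_symm_zero_succ, cycKind_decomposeFin_symm_succ_zero]
  rw [← Finset.mul_sum, sum_prod_cycKind_decomposeFin_symm_succ]

end Insertion

section Equidistribution

variable (R : Type*) [CommSemiring R]

def cycPoly (m : ℕ) : MvPolynomial CycKind R := ∑ σ : Perm (Fin m), ∏ x, X (cycKind σ x)

variable {R}

theorem cycPoly_succ (m : ℕ) :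
    cycPoly R (m + 1) = X fixed * cycPoly R m + X valley *
      ((X doubleAsc + X doubleDesc) * pderiv valley (cycPoly R m) +
        X peak * (pderiv doubleAsc (cycPoly R m) + pderiv doubleDesc (cycPoly R m) +
          pderiv fixed (cycPoly R m))) := by
  simp only [cycPoly, map_sum, Finset.mul_sum, ← Finset.sum_add_distrib,
    ← sum_prod_cycKind_decomposeFin_symm]
  rw [← Equiv.sum_comp Perm.decomposeFin.symm, Fintype.sum_prod_type, Finset.sum_comm]

def cycInvariants : Fin 3 → MvPolynomial CycKind R :=
  ![X valley * X peak, X doubleAsc + X doubleDesc, X fixed]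

theorem cycPoly_mem_range (m : ℕ) : cycPoly R m ∈ (aeval (R := R) cycInvariants).range := by
  set φ : MvPolynomial (Fin 3) R →ₐ[R] MvPolynomial CycKind R := aeval cycInvariants
  induction m with
  | zero => simp [cycPoly]
  | succ m ih =>
    obtain ⟨Q, hQ⟩ := (AlgHom.mem_range _).1 ih
    have hφ : ∀ k, pderiv k (φ Q) = φ (pderiv 0 Q) * pderiv k (X valley * X peak) +
        φ (pderiv 1 Q) * pderiv k (X doubleAsc + X doubleDesc) +
          φ (pderiv 2 Q) * pderiv k (X fixed) :=
      fun k => by rw [pderiv_aeval, Fin.sum_univ_three]; rfl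
    refine (AlgHom.mem_range _).2
      ⟨X 2 * Q + X 1 * X 0 * pderiv 0 Q + X 0 * (pderiv 1 Q + pderiv 1 Q + pderiv 2 Q), ?_⟩
    rw [cycPoly_succ, ← hQ, hφ, hφ, hφ, hφ]
    simp only [φ, cycInvariants, map_add, map_mul, aeval_X, Matrix.cons_val, Matrix.cons_val_one,
      Matrix.cons_val_zero, Derivation.leibniz, pderiv_X, Pi.single_apply, reduceCtorEq,
      if_true, if_false, smul_eq_mul, mul_zero, mul_one, zero_add, add_zero]
    ring

theorem sum_prod_cycKind_congr {S : Type*} [CommSemiring S] (m : ℕ) {w w' : CycKind → S}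
    (h₁ : w valley * w peak = w' valley * w' peak)
    (h₂ : w doubleAsc + w doubleDesc = w' doubleAsc + w' doubleDesc) (h₃ : w fixed = w' fixed) :
    ∑ σ : Perm (Fin m), ∏ x, w (cycKind σ x) = ∑ σ : Perm (Fin m), ∏ x, w' (cycKind σ x) := by
  have heval : ∀ v : CycKind → S,
      ∑ σ : Perm (Fin m), ∏ x, v (cycKind σ x) = aeval v (cycPoly ℕ m) := fun v => by
    simp [cycPoly]
  have hw : (fun j => aeval w (cycInvariants (R := ℕ) j)) =
      fun j => aeval w' (cycInvariants (R := ℕ) j) := by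
    funext j
    fin_cases j <;> simp [cycInvariants, h₁, h₂, h₃]
  obtain ⟨Q, hQ⟩ := (AlgHom.mem_range _).1 (cycPoly_mem_range (R := ℕ) m)
  rw [heval, heval, ← hQ, comp_aeval_apply, comp_aeval_apply, hw]

end Equidistribution

section Statistics

variable {S : Type*} [CommSemiring S] {m : ℕ} (σ : Perm (Fin m))

theorem sum_pow_negB_mul_pow_excB (y t : S) :
    ∑ ε : Fin m → Bool, y ^ negB ε * t ^ excB σ ε =
      ∏ x, CycKind.elim (t + y * t) (1 + y) (t + y * t) (1 + y) (1 + y * t) (cycKind σ x) := by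
  simp only [negB, excB, ← Finset.prod_const, Finset.prod_filter, ← Finset.prod_mul_distrib]
  refine (Fintype.prod_sum fun x (b : Bool) =>
    (if b then y else 1) * if x < σ x ∨ σ x = x ∧ b then t else 1).symm.trans
    (Finset.prod_congr rfl fun x _ => ?_)
  rcases cycKind_cases σ x with ⟨-, h, hk⟩ | ⟨-, h, hk⟩ | ⟨-, h, hk⟩ | ⟨-, h, hk⟩ | ⟨-, h, hk⟩
  · simp [hk, CycKind.elim, h, add_comm]
  · simp [hk, CycKind.elim, h, add_comm]
  · simp [hk, CycKind.elim, h, add_comm]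
  · simp [hk, CycKind.elim, h.not_gt, h.ne, add_comm]
  · simp [hk, CycKind.elim, h.not_gt, h.ne, add_comm]

theorem pow_mul_pow_cpk_mul_pow_exc (c a b : S) :
    c ^ m * (a ^ cpk σ * b ^ exc σ) =
      ∏ x, CycKind.elim (c * b) (c * a) (c * b) c c (cycKind σ x) := by
  rw [← Fin.prod_const m c]
  simp only [cpk, exc, ← Finset.prod_const, Finset.prod_filter, ← Finset.prod_mul_distrib]
  refine Finset.prod_congr rfl fun x _ => ?_
  rcases cycKind_cases σ x with ⟨-, h, hk⟩ | ⟨h', h, hk⟩ | ⟨h', h, hk⟩ | ⟨h', h, hk⟩ | ⟨h', h, hk⟩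
  · rw [hk, if_neg fun hc => hc.2.ne h, if_neg (not_lt.2 h.le)]
    simp [CycKind.elim]
  · rw [hk, if_neg fun hc => lt_asymm h' hc.1, if_pos h]
    simp [CycKind.elim]
  · rw [hk, if_neg fun hc => lt_asymm h hc.2, if_pos h]
    simp [CycKind.elim]
  · rw [hk, if_neg fun hc => lt_asymm h' hc.1, if_neg h.not_gt]
    simp [CycKind.elim]
  · rw [hk, if_pos ⟨h', h⟩, if_neg h.not_gt]
    simp [CycKind.elim]

end Statistics

theorem stmt17_general (n : ℕ) (y t : ℝ)
    (h : (1 + y) * (y + t) * (1 + y * t) ≠ 0) :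
    ∑ σ : Equiv.Perm (Fin n) × (Fin n → Bool),
        y ^ negB σ.2 * t ^ excB σ.1 σ.2 =
      (1 + y * t) ^ n *
        ∑ σ : Equiv.Perm (Fin n),
          ((1 + y) ^ 2 * t / ((y + t) * (1 + y * t))) ^ cpk σ *
            ((y + t) / (1 + y * t)) ^ exc σ := by
  have hyt : y + t ≠ 0 := fun h' => h (by rw [h', mul_zero, zero_mul])
  -- written in the normal form in which `field_simp` looks for it
  have hyt' : 1 + t * y ≠ 0 := fun h' => h (by rw [mul_comm y t, h', mul_zero])
  rw [Fintype.sum_prod_type, Finset.mul_sum]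
  simp only [sum_pow_negB_mul_pow_excB, pow_mul_pow_cpk_mul_pow_exc]
  apply sum_prod_cycKind_congr
  · simp only [CycKind.elim]
    field_simp
  · simp only [CycKind.elim]
    field_simp
    ring
  · rfl

theorem stmt17 (n : ℕ) (hn : 1 ≤ n) (y t : ℝ)
    (h : (1 + y) * (y + t) * (1 + y * t) ≠ 0) :
    ∑ σ : Equiv.Perm (Fin n) × (Fin n → Bool),
        y ^ negB σ.2 * t ^ excB σ.1 σ.2 =
      (1 + y * t) ^ n *
        ∑ σ : Equiv.Perm (Fin n),
          ((1 + y) ^ 2 * t / ((y + t) * (1 + y * t))) ^ cpk σ *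
            ((y + t) / (1 + y * t)) ^ exc σ :=
  stmt17_general n y t h

end EulerExc
end
end
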